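/- arXiv:1507.02846 — 8 statements merged into one kernel-verified Lean document; each statement's English description precedes it below -/
import Mathlib

section
/- The quantile function Q(s) = inf{x : s ≤ F(x)} of the St. Petersburg distribution satisfies Q(s) = 2^{⌈-log₂(1-s)⌉} = 2^{{log₂(1-s)}}/(1-s) for all s ∈ (0,1). -/
/-- The quantile function `Q(s) = inf {x : s ≤ F x}` of the St. Petersburg
distribution satisfies `Q(s) = 2^{⌈-log₂(1-s)⌉} = 2^{{log₂(1-s)}}/(1-s)` for `s ∈ (0,1)`. -/
theorem stmt_1 (F : ℝ → ℝ)
    (hF : ∀ x : ℝ, F x = if x < 2 then 0 else 1 - (2 : ℝ) ^ (-(⌊Real.logb 2 x⌋ : ℝ)))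
    (s : ℝ) (hs : s ∈ Set.Ioo (0 : ℝ) 1) :
    sInf {x : ℝ | s ≤ F x} = (2 : ℝ) ^ ((⌈-Real.logb 2 (1 - s)⌉ : ℤ) : ℝ) ∧
    sInf {x : ℝ | s ≤ F x} = (2 : ℝ) ^ Int.fract (Real.logb 2 (1 - s)) / (1 - s) := by
  obtain ⟨hs0, hs1⟩ := hs
  set t := 1 - s with htdef
  have ht0 : 0 < t := by simp only [htdef]; linarith
  have ht1 : t < 1 := by simp only [htdef]; linarith
  set L := Real.logb 2 t with hLdef
  have hL : L < 0 := Real.logb_neg (by norm_num) ht0 ht1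
  have hceil : (⌈-L⌉ : ℤ) = -⌊L⌋ := Int.ceil_neg
  have hfl : ⌊L⌋ ≤ -1 := by
    by_contra h
    push_neg at h
    have : (0:ℤ) ≤ ⌊L⌋ := by omega
    have := Int.floor_nonneg.mp this
    linarith
  have hn1 : (1:ℤ) ≤ ⌈-L⌉ := by omega
  have h2L : (2:ℝ) ^ L = t := Real.rpow_logb two_pos (by norm_num) ht0
  have hset : {x : ℝ | s ≤ F x} = Set.Ici ((2:ℝ) ^ ((⌈-L⌉:ℤ):ℝ)) := by
    ext x
    simp only [Set.mem_setOf_eq, Set.mem_Ici, hF]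
    split_ifs with hx
    · constructor
      · intro h; linarith
      · intro h
        exfalso
        have h2 : (2:ℝ) ≤ (2:ℝ) ^ ((⌈-L⌉:ℤ):ℝ) := by
          calc (2:ℝ) = 2 ^ (1:ℝ) := (Real.rpow_one 2).symm
          _ ≤ _ := by
            apply Real.rpow_le_rpow_left_iff (by norm_num : (1:ℝ) < 2) |>.mpr
            exact_mod_cast hn1
        linarith
    · push_neg at hx
      have hx0 : 0 < x := by linarith
      constructor
      · intro h
        have h1 : (2:ℝ) ^ (-(⌊Real.logb 2 x⌋:ℝ)) ≤ t := by linarith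
        rw [← h2L, Real.rpow_le_rpow_left_iff (by norm_num : (1:ℝ) < 2)] at h1
        have h2 : -L ≤ (⌊Real.logb 2 x⌋:ℝ) := by linarith
        have h3 : (⌈-L⌉:ℝ) ≤ (⌊Real.logb 2 x⌋:ℝ) := by
          exact_mod_cast Int.ceil_le.mpr h2
        have h4 : ((⌈-L⌉:ℤ):ℝ) ≤ Real.logb 2 x := h3.trans (Int.floor_le _)
        exact (Real.le_logb_iff_rpow_le (by norm_num) hx0).mp h4
      · intro h
        have h4 : ((⌈-L⌉:ℤ):ℝ) ≤ Real.logb 2 x :=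
          (Real.le_logb_iff_rpow_le (by norm_num) hx0).mpr h
        have h3 : ⌈-L⌉ ≤ ⌊Real.logb 2 x⌋ := Int.le_floor.mpr h4
        have h2 : -L ≤ (⌊Real.logb 2 x⌋:ℝ) :=
          le_trans (Int.le_ceil _) (by exact_mod_cast h3)
        have h1 : (2:ℝ) ^ (-(⌊Real.logb 2 x⌋:ℝ)) ≤ t := by
          rw [← h2L, Real.rpow_le_rpow_left_iff (by norm_num : (1:ℝ) < 2)]
          linarith
        linarith
  have hinf : sInf {x : ℝ | s ≤ F x} = (2:ℝ) ^ ((⌈-L⌉:ℤ):ℝ) := by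
    rw [hset, csInf_Ici]
  refine ⟨hinf, ?_⟩
  rw [hinf]
  have heq : ((⌈-L⌉:ℤ):ℝ) = Int.fract L - L := by
    rw [hceil, Int.fract]
    push_cast
    ring
  rw [heq, Real.rpow_sub two_pos, h2L]
end

section
/- If X₁, X₂ are i.i.d. St. Petersburg random variables, then for integers 1 ≤ k < ℓ, P{X₁ + X₂ > 2^k + 2^ℓ} = 2·2^{-ℓ} + 2·2^{-(ℓ+k)} - 4·2^{-2ℓ}, and for ℓ = k ≥ 1, P{X₁ + X₂ > 2·2^ℓ} = 2·2^{-ℓ} - 2^{-2ℓ}. -/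
open MeasureTheory ProbabilityTheory Set Filter
open scoped ENNReal

/-!
A St. Petersburg variable is almost surely a power of two, with tail
`P{X > 2^m} = ∑_{j > m} 2^{-j} = 2^{-m}`. Two distinct powers of two differ by a factor of at
least `2`, so, up to a null set, the event `{X₁ + X₂ > 2^k + 2^{m+1}}` (with `k ≤ m`) is the
disjoint union of `{X₁ > 2^{m+1}}`, `{X₁ = 2^{m+1}, X₂ > 2^k}`, `{2^k < X₁ ≤ 2^m, X₂ > 2^m}` and
`{X₁ ≤ 2^k, X₂ > 2^{m+1}}`; likewise `{X₁ + X₂ > 2·2^l}` is the disjoint union of `{X₁ > 2^l}`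
and `{X₁ ≤ 2^l, X₂ > 2^l}`. Independence turns each piece into a product of tails.
-/

lemma ENNReal.tsum_inv_two_pow_add_add_one (m : ℕ) :
    ∑' j : ℕ, ((2 : ℝ≥0∞) ^ (m + j + 1))⁻¹ = ((2 : ℝ≥0∞) ^ m)⁻¹ := by
  simp_rw [ENNReal.inv_pow, add_assoc, pow_add _ m]
  rw [ENNReal.tsum_mul_left, ENNReal.tsum_geometric_add_one, ENNReal.one_sub_inv_two,
    ENNReal.mul_inv_cancel (by simp) (by simp), mul_one]

namespace ProbabilityTheory

lemma IndepFun.measureReal_inter_preimage_eq_mul {Ω β γ : Type*} [MeasurableSpace Ω]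
    [MeasurableSpace β] [MeasurableSpace γ] {μ : Measure Ω} {X : Ω → β} {Y : Ω → γ}
    (h : IndepFun X Y μ) {A : Set β} {B : Set γ}
    (hA : MeasurableSet A) (hB : MeasurableSet B) :
    μ.real (X ⁻¹' A ∩ Y ⁻¹' B) = μ.real (X ⁻¹' A) * μ.real (Y ⁻¹' B) := by
  simp only [measureReal_def, h.measure_inter_preimage_eq_mul A B hA hB, ENNReal.toReal_mul]

end ProbabilityTheory

lemma two_mul_two_pow_le_of_lt {a b : ℕ} (h : (2 : ℝ) ^ a < 2 ^ b) : 2 * 2 ^ a ≤ (2 : ℝ) ^ b := by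
  rw [← pow_succ']
  exact pow_le_pow_right₀ one_le_two ((pow_lt_pow_iff_right₀ one_lt_two).1 h)

lemma two_pow_add_two_pow_succ_lt_iff {k m i j : ℕ} (hkm : k ≤ m) :
    (2 : ℝ) ^ k + 2 ^ (m + 1) < 2 ^ i + 2 ^ j ↔
      2 ^ (m + 1) < (2 : ℝ) ^ i ∨ ((2 : ℝ) ^ i = 2 ^ (m + 1) ∧ (2 : ℝ) ^ k < 2 ^ j) ∨
      (((2 : ℝ) ^ k < 2 ^ i ∧ (2 : ℝ) ^ i ≤ 2 ^ m) ∧ (2 : ℝ) ^ m < 2 ^ j) ∨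
      ((2 : ℝ) ^ i ≤ 2 ^ k ∧ (2 : ℝ) ^ (m + 1) < 2 ^ j) := by
  -- These instances of the factor-two gap are all the case analysis needs.
  have := two_mul_two_pow_le_of_lt (a := i) (b := m + 1)
  have := two_mul_two_pow_le_of_lt (a := j) (b := m + 1)
  have := two_mul_two_pow_le_of_lt (a := m + 1) (b := i)
  have := two_mul_two_pow_le_of_lt (a := m + 1) (b := j)
  have := two_mul_two_pow_le_of_lt (a := k) (b := i)
  have := two_mul_two_pow_le_of_lt (a := m) (b := j)
  have : (2 : ℝ) ^ k ≤ 2 ^ m := pow_le_pow_right₀ one_le_two hkm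
  have : (0 : ℝ) < 2 ^ k := by positivity
  have : (0 : ℝ) < 2 ^ i := by positivity
  have : (0 : ℝ) < 2 ^ j := by positivity
  rw [pow_succ] at *
  grind

lemma two_mul_two_pow_lt_add_iff {l i j : ℕ} :
    2 * (2 : ℝ) ^ l < 2 ^ i + 2 ^ j ↔
      (2 : ℝ) ^ l < 2 ^ i ∨ ((2 : ℝ) ^ i ≤ 2 ^ l ∧ (2 : ℝ) ^ l < 2 ^ j) := by
  have := two_mul_two_pow_le_of_lt (a := l) (b := i)
  have := two_mul_two_pow_le_of_lt (a := l) (b := j)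
  have : (0 : ℝ) < 2 ^ i := by positivity
  have : (0 : ℝ) < 2 ^ j := by positivity
  grind

section

variable {Ω : Type*} [MeasurableSpace Ω]

structure IsStPetersburg (Y : Ω → ℝ) (μ : Measure Ω) : Prop where
  measurable : Measurable Y
  measure_eq_two_pow : ∀ k : ℕ, 1 ≤ k → μ {ω | Y ω = 2 ^ k} = ((2 : ℝ≥0∞) ^ k)⁻¹

namespace IsStPetersburg

variable {μ : Measure Ω} {Y : Ω → ℝ}

lemma measure_iUnion_eq_two_pow (hY : IsStPetersburg Y μ) (m : ℕ) :
    μ (⋃ j : ℕ, Y ⁻¹' {2 ^ (m + j + 1)}) = ((2 : ℝ≥0∞) ^ m)⁻¹ := by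
  have hinj : Function.Injective fun j : ℕ => (2 : ℝ) ^ (m + j + 1) := fun a b h => by
    simpa [pow_right_inj₀] using h
  rw [measure_iUnion ((pairwise_disjoint_fiber Y).comp_of_injective hinj)
    (fun j => hY.measurable (measurableSet_singleton _)),
    ← ENNReal.tsum_inv_two_pow_add_add_one m]
  exact tsum_congr fun j => hY.measure_eq_two_pow _ (by omega)

lemma measureReal_eq_two_pow (hY : IsStPetersburg Y μ) {k : ℕ} (hk : 1 ≤ k) :
    μ.real (Y ⁻¹' {2 ^ k}) = ((2 : ℝ) ^ k)⁻¹ := by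
  rw [measureReal_def, show Y ⁻¹' {2 ^ k} = {ω | Y ω = 2 ^ k} from rfl,
    hY.measure_eq_two_pow k hk]
  simp

variable [IsProbabilityMeasure μ]

lemma ae_exists_eq_two_pow (hY : IsStPetersburg Y μ) : ∀ᵐ ω ∂μ, ∃ j : ℕ, Y ω = 2 ^ (j + 1) := by
  have hU : μ (⋃ j : ℕ, Y ⁻¹' {2 ^ (0 + j + 1)}) = 1 := by
    simpa using hY.measure_iUnion_eq_two_pow 0
  have hmeas : MeasurableSet (⋃ j : ℕ, Y ⁻¹' {2 ^ (0 + j + 1)}) :=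
    .iUnion fun j => hY.measurable (measurableSet_singleton _)
  filter_upwards [mem_ae_iff.2 ((prob_compl_eq_zero_iff hmeas).2 hU)] with ω hω
  simpa using hω

lemma measure_two_pow_lt (hY : IsStPetersburg Y μ) (m : ℕ) :
    μ (Y ⁻¹' Ioi (2 ^ m)) = ((2 : ℝ≥0∞) ^ m)⁻¹ := by
  rw [← hY.measure_iUnion_eq_two_pow m]
  refine measure_congr (eventuallyEq_set.2 ?_)
  filter_upwards [hY.ae_exists_eq_two_pow] with ω ⟨i, hi⟩
  simp only [mem_preimage, mem_Ioi, mem_iUnion, mem_singleton_iff, hi,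
    pow_lt_pow_iff_right₀ (one_lt_two (α := ℝ)), pow_right_inj₀ (two_pos (α := ℝ)) (by norm_num)]
  exact ⟨fun h => ⟨i - m, by omega⟩, fun ⟨j, hj⟩ => by omega⟩

lemma measureReal_two_pow_lt (hY : IsStPetersburg Y μ) (m : ℕ) :
    μ.real (Y ⁻¹' Ioi (2 ^ m)) = ((2 : ℝ) ^ m)⁻¹ := by
  simp [measureReal_def, hY.measure_two_pow_lt m]

lemma measureReal_le_two_pow (hY : IsStPetersburg Y μ) (m : ℕ) :
    μ.real (Y ⁻¹' Iic (2 ^ m)) = 1 - ((2 : ℝ) ^ m)⁻¹ := by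
  rw [← compl_Ioi, preimage_compl, probReal_compl_eq_one_sub (hY.measurable measurableSet_Ioi),
    hY.measureReal_two_pow_lt]

lemma measureReal_Ioc_two_pow (hY : IsStPetersburg Y μ) {k m : ℕ} (hkm : k ≤ m) :
    μ.real (Y ⁻¹' Ioc (2 ^ k) (2 ^ m)) = ((2 : ℝ) ^ k)⁻¹ - ((2 : ℝ) ^ m)⁻¹ := by
  rw [← Ioi_sdiff_Ioi, preimage_sdiff, measureReal_sdiff
    (preimage_mono (Ioi_subset_Ioi (pow_le_pow_right₀ one_le_two hkm)))
    (hY.measurable measurableSet_Ioi), hY.measureReal_two_pow_lt, hY.measureReal_two_pow_lt]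

variable {X₁ X₂ : Ω → ℝ}

lemma ae_eq_of_forall_two_pow (h₁ : IsStPetersburg X₁ μ) (h₂ : IsStPetersburg X₂ μ)
    {S T : Set Ω} (hST : ∀ ω (i j : ℕ), X₁ ω = 2 ^ i → X₂ ω = 2 ^ j → (ω ∈ S ↔ ω ∈ T)) :
    S =ᵐ[μ] T := by
  refine eventuallyEq_set.2 ?_
  filter_upwards [h₁.ae_exists_eq_two_pow, h₂.ae_exists_eq_two_pow] with ω ⟨i, hi⟩ ⟨j, hj⟩
  exact hST ω _ _ hi hj

lemma measureReal_two_pow_add_two_pow_succ_lt_add (h₁ : IsStPetersburg X₁ μ)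
    (h₂ : IsStPetersburg X₂ μ) (hindep : IndepFun X₁ X₂ μ) {k m : ℕ} (hkm : k ≤ m) :
    μ.real {ω | (2 : ℝ) ^ k + 2 ^ (m + 1) < X₁ ω + X₂ ω} =
      ((2 : ℝ) ^ (m + 1))⁻¹ + ((2 : ℝ) ^ (m + 1))⁻¹ * ((2 : ℝ) ^ k)⁻¹ +
        (((2 : ℝ) ^ k)⁻¹ - ((2 : ℝ) ^ m)⁻¹) * ((2 : ℝ) ^ m)⁻¹ +
        (1 - ((2 : ℝ) ^ k)⁻¹) * ((2 : ℝ) ^ (m + 1))⁻¹ := by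
  set E₁ := X₁ ⁻¹' Ioi (2 ^ (m + 1))
  set E₂ := X₁ ⁻¹' {2 ^ (m + 1)} ∩ X₂ ⁻¹' Ioi (2 ^ k)
  set E₃ := X₁ ⁻¹' Ioc (2 ^ k) (2 ^ m) ∩ X₂ ⁻¹' Ioi (2 ^ m)
  set E₄ := X₁ ⁻¹' Iic (2 ^ k) ∩ X₂ ⁻¹' Ioi (2 ^ (m + 1))
  have hae : ({ω | (2 : ℝ) ^ k + 2 ^ (m + 1) < X₁ ω + X₂ ω} : Set Ω) =ᵐ[μ]
      (E₁ ∪ (E₂ ∪ (E₃ ∪ E₄)) : Set Ω) :=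
    ae_eq_of_forall_two_pow h₁ h₂ fun ω i j hi hj => by
      simp only [E₁, E₂, E₃, E₄, mem_union, mem_inter_iff, mem_preimage, mem_Ioi, mem_Ioc,
        mem_Iic, mem_singleton_iff, mem_ofPred_eq, hi, hj]
      exact two_pow_add_two_pow_succ_lt_iff hkm
  have hkm' : (2 : ℝ) ^ k ≤ 2 ^ m := pow_le_pow_right₀ one_le_two hkm
  have hm : (2 : ℝ) ^ m < 2 ^ (m + 1) := pow_lt_pow_right₀ one_lt_two m.lt_succ_self
  obtain ⟨d₁, d₂, d₃⟩ : Disjoint E₁ (E₂ ∪ (E₃ ∪ E₄)) ∧ Disjoint E₂ (E₃ ∪ E₄) ∧ Disjoint E₃ E₄ := by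
    refine ⟨?_, ?_, ?_⟩ <;> refine disjoint_left.2 fun ω h h' => ?_ <;>
      simp only [E₁, E₂, E₃, E₄, mem_union, mem_inter_iff, mem_preimage, mem_Ioi, mem_Ioc,
        mem_Iic, mem_singleton_iff] at h h' <;>
      grind
  have m₂ : MeasurableSet E₂ := (h₁.measurable (measurableSet_singleton _)).inter
    (h₂.measurable measurableSet_Ioi)
  have m₃ : MeasurableSet E₃ := (h₁.measurable measurableSet_Ioc).inter
    (h₂.measurable measurableSet_Ioi)
  have m₄ : MeasurableSet E₄ := (h₁.measurable measurableSet_Iic).inter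
    (h₂.measurable measurableSet_Ioi)
  rw [measureReal_congr hae, measureReal_union d₁ (m₂.union (m₃.union m₄)),
    measureReal_union d₂ (m₃.union m₄), measureReal_union d₃ m₄,
    hindep.measureReal_inter_preimage_eq_mul (measurableSet_singleton _) measurableSet_Ioi,
    hindep.measureReal_inter_preimage_eq_mul measurableSet_Ioc measurableSet_Ioi,
    hindep.measureReal_inter_preimage_eq_mul measurableSet_Iic measurableSet_Ioi,
    h₁.measureReal_two_pow_lt, h₁.measureReal_eq_two_pow (by omega),
    h₁.measureReal_Ioc_two_pow hkm, h₁.measureReal_le_two_pow, h₂.measureReal_two_pow_lt,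
    h₂.measureReal_two_pow_lt, h₂.measureReal_two_pow_lt]
  ring

lemma measureReal_two_mul_two_pow_lt_add (h₁ : IsStPetersburg X₁ μ)
    (h₂ : IsStPetersburg X₂ μ) (hindep : IndepFun X₁ X₂ μ) (l : ℕ) :
    μ.real {ω | 2 * (2 : ℝ) ^ l < X₁ ω + X₂ ω} =
      ((2 : ℝ) ^ l)⁻¹ + (1 - ((2 : ℝ) ^ l)⁻¹) * ((2 : ℝ) ^ l)⁻¹ := by
  set E₁ : Set Ω := X₁ ⁻¹' Ioi (2 ^ l)
  set E₂ : Set Ω := X₁ ⁻¹' Iic (2 ^ l) ∩ X₂ ⁻¹' Ioi (2 ^ l)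
  have hae : ({ω | 2 * (2 : ℝ) ^ l < X₁ ω + X₂ ω} : Set Ω) =ᵐ[μ] (E₁ ∪ E₂ : Set Ω) :=
    ae_eq_of_forall_two_pow h₁ h₂ fun ω i j hi hj => by
      simp only [E₁, E₂, mem_union, mem_inter_iff, mem_preimage, mem_Ioi, mem_Iic,
        mem_ofPred_eq, hi, hj]
      exact two_mul_two_pow_lt_add_iff
  have hdisj : Disjoint E₁ E₂ :=
    ((Iic_disjoint_Ioi le_rfl).symm.preimage X₁).mono_right inter_subset_left
  rw [measureReal_congr hae, measureReal_union hdisj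
    ((h₁.measurable measurableSet_Iic).inter (h₂.measurable measurableSet_Ioi)),
    hindep.measureReal_inter_preimage_eq_mul measurableSet_Iic measurableSet_Ioi,
    h₁.measureReal_two_pow_lt, h₁.measureReal_le_two_pow, h₂.measureReal_two_pow_lt]

end IsStPetersburg

end

/-- For i.i.d. St. Petersburg random variables `X₁, X₂`:
for `1 ≤ k < ℓ`, `P{X₁ + X₂ > 2^k + 2^ℓ} = 2·2^{-ℓ} + 2·2^{-(ℓ+k)} - 4·2^{-2ℓ}`,
and for `ℓ = k ≥ 1`, `P{X₁ + X₂ > 2·2^ℓ} = 2·2^{-ℓ} - 2^{-2ℓ}`. -/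
theorem stmt_2 {Ω : Type*} [MeasurableSpace Ω] (μ : Measure Ω) [IsProbabilityMeasure μ]
    (X₁ X₂ : Ω → ℝ) (hm₁ : Measurable X₁) (hm₂ : Measurable X₂)
    (hindep : IndepFun X₁ X₂ μ)
    (hd₁ : ∀ k : ℕ, 1 ≤ k → μ {ω | X₁ ω = 2 ^ k} = ((2 : ℝ≥0∞) ^ k)⁻¹)
    (hd₂ : ∀ k : ℕ, 1 ≤ k → μ {ω | X₂ ω = 2 ^ k} = ((2 : ℝ≥0∞) ^ k)⁻¹) :
    (∀ k l : ℕ, 1 ≤ k → k < l →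
      (μ {ω | (2 : ℝ) ^ k + 2 ^ l < X₁ ω + X₂ ω}).toReal =
        2 * ((2 : ℝ) ^ l)⁻¹ + 2 * ((2 : ℝ) ^ (l + k))⁻¹ - 4 * ((2 : ℝ) ^ (2 * l))⁻¹) ∧
    (∀ l : ℕ, 1 ≤ l →
      (μ {ω | 2 * (2 : ℝ) ^ l < X₁ ω + X₂ ω}).toReal =
        2 * ((2 : ℝ) ^ l)⁻¹ - ((2 : ℝ) ^ (2 * l))⁻¹) := by
  have h₁ : IsStPetersburg X₁ μ := ⟨hm₁, hd₁⟩
  have h₂ : IsStPetersburg X₂ μ := ⟨hm₂, hd₂⟩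
  refine ⟨fun k l _ hkl => ?_, fun l _ => ?_⟩
  · obtain ⟨m, rfl⟩ : ∃ m, l = m + 1 := ⟨l - 1, by omega⟩
    rw [← measureReal_def, h₁.measureReal_two_pow_add_two_pow_succ_lt_add h₂ hindep (by omega)]
    field_simp
    ring
  · rw [← measureReal_def, h₁.measureReal_two_mul_two_pow_lt_add h₂ hindep]
    field_simp
    ring
end

section
/- If X₁, X₂ are i.i.d. St. Petersburg random variables, then lim_{ℓ→∞} P{X₁ + X₂ > 2^ℓ}/P{X₁ > 2^ℓ} = 4 and lim_{ℓ→∞} P{X₁ + X₂ > 2^ℓ - 1}/P{X₁ > 2^ℓ - 1} = 2. -/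
/-!
Almost surely each `Xᵢ` is a power `2 ^ k`, and `P{X > 2^m} = ∑_{k > m} 2^{-k} = 2^{-m}`.
Write `q = 2^{-m}`. For powers of two, `2^(m+1) < 2^a + 2^b` iff `a > m` or `b > m`, so by
independence `P{X₁ + X₂ > 2^(m+1)} = 1 - (1 - q)^2`, against `P{X₁ > 2^(m+1)} = q / 2`; the
ratio is `4 - 2q → 4`. Lowering the threshold by one adds exactly the event `X₁ = X₂ = 2^m`,
of probability `q^2`, since `2^a + 2^b = 2^(m+1)` forces `a = b = m`; meanwhile
`P{X₁ > 2^(m+1) - 1} = q`, so the second ratio is `2q / q = 2`.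
-/

theorem Nat.two_pow_succ_lt_two_pow_add_two_pow_iff {m a b : ℕ} :
    2 ^ (m + 1) < 2 ^ a + 2 ^ b ↔ m < a ∨ m < b := by
  constructor
  · intro h
    by_contra! hab
    have ha := Nat.pow_le_pow_right two_pos hab.1
    have hb := Nat.pow_le_pow_right two_pos hab.2
    rw [pow_succ] at h
    omega
  · have := Nat.pow_pos (n := a) two_pos
    have := Nat.pow_pos (n := b) two_pos
    rintro (h | h)
    · have := Nat.pow_le_pow_right two_pos h
      omega
    · have := Nat.pow_le_pow_right two_pos h
      omega

theorem Nat.two_pow_add_two_pow_eq_two_pow_succ_iff {m a b : ℕ} :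
    2 ^ a + 2 ^ b = 2 ^ (m + 1) ↔ a = m ∧ b = m := by
  refine ⟨fun h => ?_, by rintro ⟨rfl, rfl⟩; rw [pow_succ]; ring⟩
  wlog hab : a ≤ b generalizing a b
  · exact (this (b := a) (a := b) (by omega) (by omega)).symm
  obtain hab | rfl := hab.lt_or_eq
  · have h₁ : 2 ^ b < 2 ^ (m + 1) := by have := Nat.pow_pos (n := a) two_pos; omega
    have h₂ : 2 ^ (m + 1) < 2 ^ (b + 1) := by
      have := Nat.pow_lt_pow_right one_lt_two hab; rw [pow_succ]; omega
    rw [Nat.pow_lt_pow_iff_right (by norm_num)] at h₁ h₂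
    omega
  · rw [← two_mul, ← pow_succ'] at h
    have := Nat.pow_right_injective le_rfl h
    omega

open MeasureTheory ProbabilityTheory Filter Topology
open scoped ENNReal

def IsStPetersburg_s3 {Ω : Type*} [MeasurableSpace Ω] (μ : Measure Ω) (X : Ω → ℝ) : Prop :=
  ∀ k : ℕ, 1 ≤ k → μ {ω | X ω = 2 ^ k} = ((2 : ℝ≥0∞) ^ k)⁻¹

namespace IsStPetersburg_s3

open Set Function

variable {Ω : Type*} [MeasurableSpace Ω] {μ : Measure Ω} {X X₁ X₂ : Ω → ℝ}

theorem measure_iUnion_eq_two_pow_add_one (hd : IsStPetersburg_s3 μ X) (hX : Measurable X)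
    (m : ℕ) :
    μ (⋃ n : ℕ, {ω | X ω = 2 ^ (m + 1 + n)}) = ((2 : ℝ≥0∞) ^ m)⁻¹ := by
  have hdisj : Pairwise (Disjoint on fun n : ℕ => {ω | X ω = 2 ^ (m + 1 + n)}) := by
    refine fun i j hij => disjoint_left.2 fun ω hi hj => hij ?_
    have := (pow_right_inj₀ (by norm_num : (0 : ℝ) < 2) (by norm_num : (2 : ℝ) ≠ 1)).1
      (hi.symm.trans hj)
    omega
  rw [measure_iUnion hdisj fun n => hX (measurableSet_singleton _)]
  calc ∑' n : ℕ, μ {ω | X ω = 2 ^ (m + 1 + n)}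
      = ∑' n : ℕ, (2⁻¹ : ℝ≥0∞) ^ (m + 1) * 2⁻¹ ^ n := by
        congr 1 with n
        rw [hd _ (by omega), ← pow_add, ENNReal.inv_pow]
    _ = ((2 : ℝ≥0∞) ^ m)⁻¹ := by
        rw [ENNReal.tsum_mul_left, ENNReal.tsum_geometric, ENNReal.one_sub_inv_two, inv_inv,
          pow_succ, mul_assoc, ENNReal.inv_mul_cancel (by simp) (by simp), mul_one,
          ENNReal.inv_pow]

variable [IsProbabilityMeasure μ]

theorem ae_exists_eq_two_pow_s3 (hd : IsStPetersburg_s3 μ X) (hX : Measurable X) :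
    ∀ᵐ ω ∂μ, ∃ k : ℕ, X ω = 2 ^ k := by
  have hmeas : MeasurableSet (⋃ n : ℕ, {ω | X ω = 2 ^ (0 + 1 + n)}) :=
    .iUnion fun n => hX (measurableSet_singleton _)
  have hmem : ∀ᵐ ω ∂μ, ω ∈ ⋃ n : ℕ, {ω | X ω = 2 ^ (0 + 1 + n)} := by
    rw [ae_mem_iff_measure_eq hmeas.nullMeasurableSet, hd.measure_iUnion_eq_two_pow_add_one hX]
    simp
  filter_upwards [hmem] with ω hω
  obtain ⟨n, hn⟩ := mem_iUnion.1 hω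
  exact ⟨_, hn⟩

theorem measureReal_two_pow_lt_s3 (hd : IsStPetersburg_s3 μ X) (hX : Measurable X) (m : ℕ) :
    μ.real {ω | 2 ^ m < X ω} = ((2 : ℝ) ^ m)⁻¹ := by
  suffices μ {ω | 2 ^ m < X ω} = μ (⋃ n : ℕ, {ω | X ω = 2 ^ (m + 1 + n)}) by
    simp [measureReal_def, this, hd.measure_iUnion_eq_two_pow_add_one hX]
  refine measure_congr (eventuallyEq_set.2 ?_)
  filter_upwards [hd.ae_exists_eq_two_pow_s3 hX] with ω ⟨k, hk⟩
  simp only [mem_ofPred_eq, mem_iUnion, hk, pow_lt_pow_iff_right₀ (one_lt_two : (1 : ℝ) < 2),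
    pow_right_inj₀ (by norm_num : (0 : ℝ) < 2) (by norm_num : (2 : ℝ) ≠ 1)]
  exact ⟨fun h => ⟨k - (m + 1), by omega⟩, fun ⟨n, hn⟩ => by omega⟩

theorem measureReal_two_pow_succ_sub_one_lt (hd : IsStPetersburg_s3 μ X) (hX : Measurable X)
    (m : ℕ) : μ.real {ω | 2 ^ (m + 1) - 1 < X ω} = ((2 : ℝ) ^ m)⁻¹ := by
  rw [← hd.measureReal_two_pow_lt_s3 hX]
  refine measureReal_congr (eventuallyEq_set.2 ?_)
  filter_upwards [hd.ae_exists_eq_two_pow_s3 hX] with ω ⟨k, hk⟩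
  rw [hk, sub_lt_iff_lt_add, pow_lt_pow_iff_right₀ (one_lt_two : (1 : ℝ) < 2)]
  exact_mod_cast Nat.lt_succ_iff.trans (Nat.pow_le_pow_iff_right (le_refl 2))

theorem measureReal_two_pow_succ_lt_add (hd₁ : IsStPetersburg_s3 μ X₁)
    (hd₂ : IsStPetersburg_s3 μ X₂) (hX₁ : Measurable X₁) (hX₂ : Measurable X₂)
    (hind : IndepFun X₁ X₂ μ) (m : ℕ) :
    μ.real {ω | 2 ^ (m + 1) < X₁ ω + X₂ ω} =
      2 * ((2 : ℝ) ^ m)⁻¹ - ((2 : ℝ) ^ m)⁻¹ ^ 2 := by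
  set A : Set Ω := {ω | (2 : ℝ) ^ m < X₁ ω}
  set B : Set Ω := {ω | (2 : ℝ) ^ m < X₂ ω}
  have hunion : {ω | 2 ^ (m + 1) < X₁ ω + X₂ ω} =ᵐ[μ] (A ∪ B : Set Ω) := by
    refine eventuallyEq_set.2 ?_
    filter_upwards [hd₁.ae_exists_eq_two_pow_s3 hX₁, hd₂.ae_exists_eq_two_pow_s3 hX₂]
      with ω ⟨a, ha⟩ ⟨b, hb⟩
    simp only [A, B, mem_ofPred_eq, mem_union, ha, hb,
      pow_lt_pow_iff_right₀ (one_lt_two : (1 : ℝ) < 2)]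
    exact_mod_cast Nat.two_pow_succ_lt_two_pow_add_two_pow_iff
  have hinter : μ.real (A ∩ B) = μ.real A * μ.real B := by
    rw [measureReal_def, measureReal_def, measureReal_def, ← ENNReal.toReal_mul]
    exact congrArg ENNReal.toReal
      (hind.measure_inter_preimage_eq_mul (Ioi _) (Ioi _) measurableSet_Ioi measurableSet_Ioi)
  have := measureReal_union_add_inter (μ := μ) (s := A) (t := B) (hX₂ measurableSet_Ioi)
  rw [hinter, hd₁.measureReal_two_pow_lt_s3 hX₁, hd₂.measureReal_two_pow_lt_s3 hX₂] at this
  rw [measureReal_congr hunion]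
  linarith

theorem measureReal_two_pow_succ_sub_one_lt_add (hd₁ : IsStPetersburg_s3 μ X₁)
    (hd₂ : IsStPetersburg_s3 μ X₂) (hX₁ : Measurable X₁) (hX₂ : Measurable X₂)
    (hind : IndepFun X₁ X₂ μ) {m : ℕ} (hm : 1 ≤ m) :
    μ.real {ω | 2 ^ (m + 1) - 1 < X₁ ω + X₂ ω} = 2 * ((2 : ℝ) ^ m)⁻¹ := by
  set E : Set Ω := {ω | (2 : ℝ) ^ (m + 1) < X₁ ω + X₂ ω}
  set F : Set Ω := {ω | X₁ ω = 2 ^ m} ∩ {ω | X₂ ω = 2 ^ m}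
  have hsplit : {ω | 2 ^ (m + 1) - 1 < X₁ ω + X₂ ω} =ᵐ[μ] (E ∪ F : Set Ω) := by
    refine eventuallyEq_set.2 ?_
    filter_upwards [hd₁.ae_exists_eq_two_pow_s3 hX₁, hd₂.ae_exists_eq_two_pow_s3 hX₂]
      with ω ⟨a, ha⟩ ⟨b, hb⟩
    have key : 2 ^ (m + 1) < 2 ^ a + 2 ^ b + 1 ↔
        2 ^ (m + 1) < 2 ^ a + 2 ^ b ∨ (a = m ∧ b = m) := by
      rw [Nat.lt_succ_iff, le_iff_lt_or_eq, eq_comm, Nat.two_pow_add_two_pow_eq_two_pow_succ_iff]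
    simp only [E, F, mem_ofPred_eq, mem_union, mem_inter_iff, ha, hb, sub_lt_iff_lt_add,
      pow_right_inj₀ (by norm_num : (0 : ℝ) < 2) (by norm_num : (2 : ℝ) ≠ 1)]
    exact_mod_cast key
  have hdisj : Disjoint E F := by
    refine disjoint_left.2 fun ω hE ⟨h₁, h₂⟩ => ?_
    simp only [E, mem_ofPred_eq] at hE h₁ h₂
    rw [h₁, h₂, pow_succ] at hE
    linarith
  have hF : μ.real F = ((2 : ℝ) ^ m)⁻¹ * ((2 : ℝ) ^ m)⁻¹ := by
    have hprod : μ F = μ {ω | X₁ ω = 2 ^ m} * μ {ω | X₂ ω = 2 ^ m} :=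
      hind.measure_inter_preimage_eq_mul {(2 : ℝ) ^ m} {(2 : ℝ) ^ m}
        (measurableSet_singleton _) (measurableSet_singleton _)
    simp [measureReal_def, hprod, hd₁ m hm, hd₂ m hm]
  rw [measureReal_congr hsplit, measureReal_union hdisj
    ((hX₁ (measurableSet_singleton _)).inter (hX₂ (measurableSet_singleton _))),
    hd₁.measureReal_two_pow_succ_lt_add hd₂ hX₁ hX₂ hind, hF]
  ring

end IsStPetersburg_s3

/-- For i.i.d. St. Petersburg random variables `X₁, X₂`:
`lim_{ℓ→∞} P{X₁+X₂ > 2^ℓ}/P{X₁ > 2^ℓ} = 4` and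
`lim_{ℓ→∞} P{X₁+X₂ > 2^ℓ - 1}/P{X₁ > 2^ℓ - 1} = 2`. -/
theorem stmt_3 {Ω : Type*} [MeasurableSpace Ω] (μ : Measure Ω) [IsProbabilityMeasure μ]
    (X₁ X₂ : Ω → ℝ) (hm₁ : Measurable X₁) (hm₂ : Measurable X₂)
    (hindep : IndepFun X₁ X₂ μ)
    (hd₁ : ∀ k : ℕ, 1 ≤ k → μ {ω | X₁ ω = 2 ^ k} = ((2 : ℝ≥0∞) ^ k)⁻¹)
    (hd₂ : ∀ k : ℕ, 1 ≤ k → μ {ω | X₂ ω = 2 ^ k} = ((2 : ℝ≥0∞) ^ k)⁻¹) :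
    Tendsto (fun l : ℕ =>
        (μ {ω | (2 : ℝ) ^ l < X₁ ω + X₂ ω}).toReal /
          (μ {ω | (2 : ℝ) ^ l < X₁ ω}).toReal) atTop (𝓝 4) ∧
    Tendsto (fun l : ℕ =>
        (μ {ω | (2 : ℝ) ^ l - 1 < X₁ ω + X₂ ω}).toReal /
          (μ {ω | (2 : ℝ) ^ l - 1 < X₁ ω}).toReal) atTop (𝓝 2) := by
  have h₁ : IsStPetersburg_s3 μ X₁ := hd₁
  have h₂ : IsStPetersburg_s3 μ X₂ := hd₂
  simp only [← measureReal_def]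
  constructor
  · rw [← tendsto_add_atTop_iff_nat 1]
    have hratio : ∀ m : ℕ, μ.real {ω | (2 : ℝ) ^ (m + 1) < X₁ ω + X₂ ω} /
        μ.real {ω | (2 : ℝ) ^ (m + 1) < X₁ ω} = 4 - 2 * ((2 : ℝ) ^ m)⁻¹ := fun m => by
      rw [h₁.measureReal_two_pow_succ_lt_add h₂ hm₁ hm₂ hindep,
        h₁.measureReal_two_pow_lt_s3 hm₁, pow_succ]
      field_simp
      ring
    simp only [hratio]
    have h0 : Tendsto (fun m : ℕ => ((2 : ℝ) ^ m)⁻¹) atTop (𝓝 0) :=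
      tendsto_inv_atTop_zero.comp (tendsto_pow_atTop_atTop_of_one_lt one_lt_two)
    simpa using (h0.const_mul 2).const_sub 4
  · rw [← tendsto_add_atTop_iff_nat 1]
    refine tendsto_const_nhds.congr' ?_
    filter_upwards [eventually_ge_atTop 1] with m hm
    rw [h₁.measureReal_two_pow_succ_sub_one_lt_add h₂ hm₁ hm₂ hindep hm,
      h₁.measureReal_two_pow_succ_sub_one_lt hm₁]
    field_simp
end

section
/- The St. Petersburg distribution is not subexponential: liminf_{x→∞} (1-F*F(x))/(1-F(x)) = 2 while limsup_{x→∞} (1-F*F(x))/(1-F(x)) = 4, where F*F is the distribution function of the sum of two independent St. Petersburg variables. -/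
open MeasureTheory ProbabilityTheory Filter Topology
open scoped ENNReal

namespace StPAux

lemma pow_inj : Function.Injective (fun k : ℕ => (2:ℝ) ^ k) :=
  (pow_right_strictMono₀ (one_lt_two : (1:ℝ) < 2)).injective

lemma tsum_aux (n : ℕ) : ∑' k : ℕ, ((2:ℝ≥0∞) ^ (n + 1 + k))⁻¹ = ((2:ℝ≥0∞) ^ n)⁻¹ := by
  have h : ∀ k : ℕ, ((2:ℝ≥0∞) ^ (n + 1 + k))⁻¹ = ((2:ℝ≥0∞) ^ (n+1))⁻¹ * (2⁻¹) ^ k := by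
    intro k
    rw [pow_add, ENNReal.mul_inv (by simp) (by simp)]
    congr 1
    exact ENNReal.inv_pow
  simp_rw [h]
  rw [ENNReal.tsum_mul_left, ENNReal.tsum_geometric, ENNReal.one_sub_inv_two, inv_inv,
    pow_succ, ENNReal.mul_inv (by simp) (by simp)]
  rw [mul_assoc, ENNReal.inv_mul_cancel two_ne_zero ENNReal.ofNat_ne_top, mul_one]

variable {Ω : Type*} [MeasurableSpace Ω] {μ : Measure Ω} [IsProbabilityMeasure μ]
variable {X : Ω → ℝ}

lemma ae_support (hm : Measurable X)
    (hd : ∀ k : ℕ, 1 ≤ k → μ {ω | X ω = 2 ^ k} = ((2 : ℝ≥0∞) ^ k)⁻¹) :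
    ∀ᵐ ω ∂μ, ∃ k : ℕ, X ω = 2 ^ (k + 1) := by
  set A : ℕ → Set Ω := fun k => {ω | X ω = 2 ^ (k+1)} with hA
  have hAm : ∀ k, MeasurableSet (A k) := fun k => hm (measurableSet_singleton _)
  have hdisj : Pairwise (Function.onFun Disjoint A) := by
    intro i j hij
    simp only [Function.onFun, Set.disjoint_left, hA]
    intro ω h1 h2
    exact hij (by simpa using pow_inj (h1.symm.trans h2 : (2:ℝ)^(i+1) = 2^(j+1)))
  have hU : μ (⋃ k, A k) = 1 := by
    rw [measure_iUnion hdisj hAm]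
    have h1 : ∀ k : ℕ, μ (A k) = ((2:ℝ≥0∞) ^ (0 + 1 + k))⁻¹ := by
      intro k
      rw [hA]
      simpa [add_comm, Nat.zero_add] using hd (k+1) (Nat.le_add_left 1 k)
    simp_rw [h1, tsum_aux 0, pow_zero, inv_one]
  have hcompl : μ ((⋃ k, A k)ᶜ) = 0 := by
    rw [measure_compl (MeasurableSet.iUnion hAm) (by simp), hU, measure_univ, tsub_self]
  filter_upwards [measure_eq_zero_iff_ae_notMem.mp hcompl] with ω hω
  simpa [A] using hω

lemma tail_ge (hm : Measurable X)
    (hd : ∀ k : ℕ, 1 ≤ k → μ {ω | X ω = 2 ^ k} = ((2 : ℝ≥0∞) ^ k)⁻¹) (n : ℕ) :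
    μ {ω | (2:ℝ) ^ (n+1) ≤ X ω} = ((2:ℝ≥0∞) ^ n)⁻¹ := by
  set U : Set Ω := ⋃ k, {ω | X ω = 2 ^ (n + 1 + k)} with hUdef
  have hEq : {ω | (2:ℝ) ^ (n+1) ≤ X ω} =ᵐ[μ] U := by
    rw [eventuallyEq_set]
    filter_upwards [ae_support hm hd] with ω ⟨j, hj⟩
    simp only [Set.mem_setOf_eq, hUdef, Set.mem_iUnion]
    constructor
    · intro hle
      have : n + 1 ≤ j + 1 := by
        rw [← pow_le_pow_iff_right₀ (one_lt_two : (1:ℝ) < 2)]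
        rw [← hj]; exact hle
      exact ⟨j - n, by rw [hj]; congr 1; omega⟩
    · rintro ⟨k, hk⟩
      rw [hk]
      exact pow_le_pow_right₀ one_le_two (by omega)
  have hdisj : Pairwise (Function.onFun Disjoint (fun k => {ω | X ω = (2:ℝ) ^ (n + 1 + k)})) := by
    intro i j hij
    simp only [Function.onFun, Set.disjoint_left]
    intro ω h1 h2
    exact hij (by simpa using pow_inj (h1.symm.trans h2 : (2:ℝ)^(n+1+i) = 2^(n+1+j)))
  rw [measure_congr hEq, hUdef,
    measure_iUnion hdisj (fun k => hm (measurableSet_singleton _))]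
  simp_rw [fun k => hd (n+1+k) (by omega)]
  exact tsum_aux n

lemma tail_gt (hm : Measurable X)
    (hd : ∀ k : ℕ, 1 ≤ k → μ {ω | X ω = 2 ^ k} = ((2 : ℝ≥0∞) ^ k)⁻¹)
    {n : ℕ} {x : ℝ} (h1 : 2 ^ n ≤ x) (h2 : x < 2 ^ (n+1)) :
    μ {ω | x < X ω} = ((2:ℝ≥0∞) ^ n)⁻¹ := by
  have hEq : {ω | x < X ω} =ᵐ[μ] {ω | (2:ℝ) ^ (n+1) ≤ X ω} := by
    rw [eventuallyEq_set]
    filter_upwards [ae_support hm hd] with ω ⟨j, hj⟩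
    show x < X ω ↔ (2:ℝ) ^ (n+1) ≤ X ω
    constructor
    · intro hlt
      rw [hj] at hlt ⊢
      have : n < j + 1 := by
        by_contra hc
        push_neg at hc
        exact absurd (lt_of_le_of_lt h1 hlt) (not_lt.mpr (pow_le_pow_right₀ one_le_two hc))
      exact pow_le_pow_right₀ one_le_two (by omega)
    · intro hle
      exact lt_of_lt_of_le h2 hle
  rw [measure_congr hEq]
  exact tail_ge hm hd n

variable {X₁ X₂ : Ω → ℝ}



lemma inv_pow_succ_add (m : ℕ) :
    ((2:ℝ≥0∞) ^ (m+1))⁻¹ + ((2:ℝ≥0∞) ^ (m+1))⁻¹ = ((2:ℝ≥0∞) ^ m)⁻¹ := by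
  rw [← two_mul, pow_succ, ENNReal.mul_inv (by simp) (by simp),
    mul_comm ((2:ℝ≥0∞) ^ m)⁻¹ 2⁻¹, ← mul_assoc,
    ENNReal.mul_inv_cancel two_ne_zero ENNReal.ofNat_ne_top, one_mul]

lemma inv_pow_le_one (m : ℕ) : ((2:ℝ≥0∞) ^ m)⁻¹ ≤ 1 :=
  ENNReal.inv_le_one.mpr (one_le_pow₀ one_le_two)

lemma tail_ge' (hm : Measurable X)
    (hd : ∀ k : ℕ, 1 ≤ k → μ {ω | X ω = 2 ^ k} = ((2 : ℝ≥0∞) ^ k)⁻¹) (n : ℕ) :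
    μ (X ⁻¹' Set.Ici ((2:ℝ) ^ (n+1))) = ((2:ℝ≥0∞) ^ n)⁻¹ :=
  tail_ge hm hd n

lemma meas_Ico (hm : Measurable X)
    (hd : ∀ k : ℕ, 1 ≤ k → μ {ω | X ω = 2 ^ k} = ((2 : ℝ≥0∞) ^ k)⁻¹)
    {a b : ℕ} (hab : a ≤ b) :
    μ (X ⁻¹' Set.Ico ((2:ℝ) ^ (a+1)) ((2:ℝ) ^ (b+1)))
      = ((2:ℝ≥0∞) ^ a)⁻¹ - ((2:ℝ≥0∞) ^ b)⁻¹ := by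
  have hset : X ⁻¹' Set.Ico ((2:ℝ) ^ (a+1)) ((2:ℝ) ^ (b+1))
      = X ⁻¹' Set.Ici ((2:ℝ) ^ (a+1)) \ X ⁻¹' Set.Ici ((2:ℝ) ^ (b+1)) := by
    ext ω
    simp only [Set.mem_preimage, Set.mem_Ico, Set.mem_diff, Set.mem_Ici, not_le]
  rw [hset, measure_diff (Set.preimage_mono (Set.Ici_subset_Ici.mpr
      (pow_le_pow_right₀ one_le_two (by omega))))
      (hm measurableSet_Ici).nullMeasurableSet (measure_ne_top μ _),
    tail_ge' hm hd, tail_ge' hm hd]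

lemma W_meas (hm₁ : Measurable X₁) (hm₂ : Measurable X₂) (hindep : IndepFun X₁ X₂ μ)
    (hd₁ : ∀ k : ℕ, 1 ≤ k → μ {ω | X₁ ω = 2 ^ k} = ((2 : ℝ≥0∞) ^ k)⁻¹)
    (hd₂ : ∀ k : ℕ, 1 ≤ k → μ {ω | X₂ ω = 2 ^ k} = ((2 : ℝ≥0∞) ^ k)⁻¹) (m : ℕ) :
    μ (X₁ ⁻¹' Set.Ici ((2:ℝ) ^ (m+1+1))
      ∪ (X₁ ⁻¹' Set.Ico ((2:ℝ) ^ (0+1)) ((2:ℝ) ^ (m+1+1)) ∩ X₂ ⁻¹' Set.Ici ((2:ℝ) ^ (m+1+1)))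
      ∪ (X₁ ⁻¹' Set.Ico ((2:ℝ) ^ (m+1)) ((2:ℝ) ^ (m+1+1))
          ∩ X₂ ⁻¹' Set.Ico ((2:ℝ) ^ (m+1)) ((2:ℝ) ^ (m+1+1))))
      = ((2:ℝ≥0∞) ^ m)⁻¹ := by
  set a : ℝ≥0∞ := ((2:ℝ≥0∞) ^ (m+1))⁻¹ with ha
  have hBmeas : MeasurableSet (X₁ ⁻¹' Set.Ico ((2:ℝ) ^ (0+1)) ((2:ℝ) ^ (m+1+1))
      ∩ X₂ ⁻¹' Set.Ici ((2:ℝ) ^ (m+1+1))) :=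
    (hm₁ measurableSet_Ico).inter (hm₂ measurableSet_Ici)
  have hCmeas : MeasurableSet (X₁ ⁻¹' Set.Ico ((2:ℝ) ^ (m+1)) ((2:ℝ) ^ (m+1+1))
      ∩ X₂ ⁻¹' Set.Ico ((2:ℝ) ^ (m+1)) ((2:ℝ) ^ (m+1+1))) :=
    (hm₁ measurableSet_Ico).inter (hm₂ measurableSet_Ico)
  have hdAB : Disjoint (X₁ ⁻¹' Set.Ici ((2:ℝ) ^ (m+1+1)))
      (X₁ ⁻¹' Set.Ico ((2:ℝ) ^ (0+1)) ((2:ℝ) ^ (m+1+1)) ∩ X₂ ⁻¹' Set.Ici ((2:ℝ) ^ (m+1+1))) := by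
    rw [Set.disjoint_left]
    rintro ω h1 ⟨h2, _⟩
    exact absurd h1 (not_le.mpr h2.2)
  have hdABC : Disjoint (X₁ ⁻¹' Set.Ici ((2:ℝ) ^ (m+1+1))
      ∪ (X₁ ⁻¹' Set.Ico ((2:ℝ) ^ (0+1)) ((2:ℝ) ^ (m+1+1)) ∩ X₂ ⁻¹' Set.Ici ((2:ℝ) ^ (m+1+1))))
      (X₁ ⁻¹' Set.Ico ((2:ℝ) ^ (m+1)) ((2:ℝ) ^ (m+1+1))
        ∩ X₂ ⁻¹' Set.Ico ((2:ℝ) ^ (m+1)) ((2:ℝ) ^ (m+1+1))) := by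
    rw [Set.disjoint_left]
    rintro ω (h1 | ⟨_, h1⟩) ⟨h2, h3⟩
    · exact absurd h1 (not_le.mpr h2.2)
    · exact absurd h1 (not_le.mpr h3.2)
  rw [measure_union hdABC hCmeas, measure_union hdAB hBmeas,
    tail_ge' hm₁ hd₁ (m+1),
    hindep.measure_inter_preimage_eq_mul _ _ measurableSet_Ico measurableSet_Ici,
    hindep.measure_inter_preimage_eq_mul _ _ measurableSet_Ico measurableSet_Ico,
    meas_Ico hm₁ hd₁ (Nat.zero_le (m+1)), meas_Ico hm₁ hd₁ (Nat.le_succ m),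
    meas_Ico hm₂ hd₂ (Nat.le_succ m), tail_ge' hm₂ hd₂ (m+1)]
  have h1 : ((2:ℝ≥0∞) ^ m)⁻¹ - a = a :=
    ENNReal.sub_eq_of_eq_add (by simp [ha]) (inv_pow_succ_add m).symm
  have h2 : ((2:ℝ≥0∞) ^ 0)⁻¹ - a = 1 - a := by norm_num
  rw [← ha, h1, h2]
  calc a + (1 - a) * a + a * a = a + ((1 - a) + a) * a := by ring
    _ = a + a := by rw [tsub_add_cancel_of_le (inv_pow_le_one (m+1)), one_mul]
    _ = ((2:ℝ≥0∞) ^ m)⁻¹ := inv_pow_succ_add m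

lemma pow_lt_pow_nat {i j : ℕ} (h : (2:ℝ) ^ i < 2 ^ j) : i < j :=
  (pow_lt_pow_iff_right₀ (one_lt_two : (1:ℝ) < 2)).mp h

lemma le_pow_nat {i j : ℕ} (h : i ≤ j) : (2:ℝ) ^ i ≤ 2 ^ j :=
  pow_le_pow_right₀ one_le_two h

lemma sum_lower (hm₁ : Measurable X₁) (hm₂ : Measurable X₂) (hindep : IndepFun X₁ X₂ μ)
    (hd₁ : ∀ k : ℕ, 1 ≤ k → μ {ω | X₁ ω = 2 ^ k} = ((2 : ℝ≥0∞) ^ k)⁻¹)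
    (hd₂ : ∀ k : ℕ, 1 ≤ k → μ {ω | X₂ ω = 2 ^ k} = ((2 : ℝ≥0∞) ^ k)⁻¹)
    {m : ℕ} {x : ℝ} (hx2 : x < 2 ^ (m+1+1)) :
    ((2:ℝ≥0∞) ^ m)⁻¹ ≤ μ {ω | x < X₁ ω + X₂ ω} := by
  rw [← W_meas hm₁ hm₂ hindep hd₁ hd₂ m]
  apply measure_mono_ae
  filter_upwards [ae_support hm₂ hd₂] with ω ⟨k, hk⟩ hW
  have hX₂pos : (0:ℝ) < X₂ ω := by rw [hk]; positivity
  show x < X₁ ω + X₂ ω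
  have hsplit : (2:ℝ) ^ (m+1+1) = 2 ^ (m+1) + 2 ^ (m+1) := by rw [pow_succ]; ring
  rcases hW with (h | ⟨h1, h2⟩) | ⟨h1, h2⟩
  · have : (2:ℝ) ^ (m+1+1) ≤ X₁ ω := h
    linarith
  · have h1' : (2:ℝ) ^ (0+1) ≤ X₁ ω := h1.1
    have h2' : (2:ℝ) ^ (m+1+1) ≤ X₂ ω := h2
    have : (0:ℝ) < 2 ^ (0+1) := by positivity
    linarith
  · have h1' : (2:ℝ) ^ (m+1) ≤ X₁ ω := h1.1
    have h2' : (2:ℝ) ^ (m+1) ≤ X₂ ω := h2.1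
    linarith

lemma sum_upper_three (hm₁ : Measurable X₁) (hm₂ : Measurable X₂) (hindep : IndepFun X₁ X₂ μ)
    (hd₁ : ∀ k : ℕ, 1 ≤ k → μ {ω | X₁ ω = 2 ^ k} = ((2 : ℝ≥0∞) ^ k)⁻¹)
    (hd₂ : ∀ k : ℕ, 1 ≤ k → μ {ω | X₂ ω = 2 ^ k} = ((2 : ℝ≥0∞) ^ k)⁻¹) (m : ℕ) :
    μ {ω | 3 * (2:ℝ) ^ m < X₁ ω + X₂ ω} ≤ ((2:ℝ≥0∞) ^ m)⁻¹ := by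
  rw [← W_meas hm₁ hm₂ hindep hd₁ hd₂ m]
  apply measure_mono_ae
  filter_upwards [ae_support hm₁ hd₁, ae_support hm₂ hd₂] with ω ⟨j, hj⟩ ⟨k, hk⟩ hlt
  have hlt : 3 * (2:ℝ) ^ m < X₁ ω + X₂ ω := hlt
  have hsplit : (3:ℝ) * 2 ^ m = 2 ^ (m+1) + 2 ^ m := by rw [pow_succ]; ring
  by_cases h1 : (2:ℝ) ^ (m+1+1) ≤ X₁ ω
  · exact Or.inl (Or.inl h1)
  push_neg at h1
  by_cases h2 : (2:ℝ) ^ (m+1+1) ≤ X₂ ω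
  · exact Or.inl (Or.inr ⟨⟨by rw [hj]; exact le_pow_nat (by omega), h1⟩, h2⟩)
  push_neg at h2
  -- both < 2^(m+2); show both ≥ 2^(m+1)
  have hge₂ : (2:ℝ) ^ (m+1) ≤ X₂ ω := by
    by_contra hc
    push_neg at hc
    have hk1 : k + 1 < m + 1 := pow_lt_pow_nat (by rw [← hk]; exact hc)
    have hX₂le : X₂ ω ≤ 2 ^ m := by rw [hk]; exact le_pow_nat (by omega)
    have hX₁gt : (2:ℝ) ^ (m+1) < X₁ ω := by linarith
    have : m + 1 < j + 1 := pow_lt_pow_nat (by rw [← hj]; exact hX₁gt)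
    have hge := le_pow_nat (show m+1+1 ≤ j+1 by omega)
    rw [← hj] at hge
    linarith
  have hge₁ : (2:ℝ) ^ (m+1) ≤ X₁ ω := by
    by_contra hc
    push_neg at hc
    have hj1 : j + 1 < m + 1 := pow_lt_pow_nat (by rw [← hj]; exact hc)
    have hX₁le : X₁ ω ≤ 2 ^ m := by rw [hj]; exact le_pow_nat (by omega)
    have hX₂gt : (2:ℝ) ^ (m+1) < X₂ ω := by linarith
    have : m + 1 < k + 1 := pow_lt_pow_nat (by rw [← hk]; exact hX₂gt)
    have hge := le_pow_nat (show m+1+1 ≤ k+1 by omega)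
    rw [← hk] at hge
    linarith
  exact Or.inr ⟨⟨hge₁, h1⟩, hge₂, h2⟩

lemma V_meas (hm₁ : Measurable X₁) (hm₂ : Measurable X₂) (hindep : IndepFun X₁ X₂ μ)
    (hd₁ : ∀ k : ℕ, 1 ≤ k → μ {ω | X₁ ω = 2 ^ k} = ((2 : ℝ≥0∞) ^ k)⁻¹)
    (hd₂ : ∀ k : ℕ, 1 ≤ k → μ {ω | X₂ ω = 2 ^ k} = ((2 : ℝ≥0∞) ^ k)⁻¹) (m : ℕ) :
    μ (X₁ ⁻¹' Set.Ici ((2:ℝ) ^ (m+1))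
      ∪ (X₁ ⁻¹' Set.Ico ((2:ℝ) ^ (0+1)) ((2:ℝ) ^ (m+1)) ∩ X₂ ⁻¹' Set.Ici ((2:ℝ) ^ (m+1))))
      = ((2:ℝ≥0∞) ^ m)⁻¹ + (1 - ((2:ℝ≥0∞) ^ m)⁻¹) * ((2:ℝ≥0∞) ^ m)⁻¹ := by
  have hBmeas : MeasurableSet (X₁ ⁻¹' Set.Ico ((2:ℝ) ^ (0+1)) ((2:ℝ) ^ (m+1))
      ∩ X₂ ⁻¹' Set.Ici ((2:ℝ) ^ (m+1))) :=
    (hm₁ measurableSet_Ico).inter (hm₂ measurableSet_Ici)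
  have hdAB : Disjoint (X₁ ⁻¹' Set.Ici ((2:ℝ) ^ (m+1)))
      (X₁ ⁻¹' Set.Ico ((2:ℝ) ^ (0+1)) ((2:ℝ) ^ (m+1)) ∩ X₂ ⁻¹' Set.Ici ((2:ℝ) ^ (m+1))) := by
    rw [Set.disjoint_left]
    rintro ω h1 ⟨h2, _⟩
    exact absurd h1 (not_le.mpr h2.2)
  rw [measure_union hdAB hBmeas, tail_ge' hm₁ hd₁ m,
    hindep.measure_inter_preimage_eq_mul _ _ measurableSet_Ico measurableSet_Ici,
    meas_Ico hm₁ hd₁ (Nat.zero_le m), tail_ge' hm₂ hd₂ m]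
  norm_num

lemma sum_lower_pow (hm₁ : Measurable X₁) (hm₂ : Measurable X₂) (hindep : IndepFun X₁ X₂ μ)
    (hd₁ : ∀ k : ℕ, 1 ≤ k → μ {ω | X₁ ω = 2 ^ k} = ((2 : ℝ≥0∞) ^ k)⁻¹)
    (hd₂ : ∀ k : ℕ, 1 ≤ k → μ {ω | X₂ ω = 2 ^ k} = ((2 : ℝ≥0∞) ^ k)⁻¹) (m : ℕ) :
    ((2:ℝ≥0∞) ^ m)⁻¹ + (1 - ((2:ℝ≥0∞) ^ m)⁻¹) * ((2:ℝ≥0∞) ^ m)⁻¹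
      ≤ μ {ω | (2:ℝ) ^ (m+1) < X₁ ω + X₂ ω} := by
  rw [← V_meas hm₁ hm₂ hindep hd₁ hd₂ m]
  apply measure_mono_ae
  filter_upwards [ae_support hm₁ hd₁, ae_support hm₂ hd₂] with ω ⟨j, hj⟩ ⟨k, hk⟩ hV
  have hX₂pos : (0:ℝ) < X₂ ω := by rw [hk]; positivity
  have hX₁pos : (0:ℝ) < X₁ ω := by rw [hj]; positivity
  show (2:ℝ) ^ (m+1) < X₁ ω + X₂ ω
  rcases hV with h | ⟨_, h2⟩
  · have : (2:ℝ) ^ (m+1) ≤ X₁ ω := h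
    linarith
  · have : (2:ℝ) ^ (m+1) ≤ X₂ ω := h2
    linarith

lemma toReal_inv_pow (n : ℕ) : (((2:ℝ≥0∞) ^ n)⁻¹).toReal = ((2:ℝ) ^ n)⁻¹ := by
  rw [ENNReal.toReal_inv, ENNReal.toReal_pow, ENNReal.toReal_ofNat]

lemma exists_pow {x : ℝ} (hx : 2 ≤ x) : ∃ m : ℕ, (2:ℝ) ^ (m+1) ≤ x ∧ x < 2 ^ (m+1+1) := by
  have hx0 : (0:ℝ) ≤ x := by linarith
  have hfl : 2 ≤ ⌊x⌋₊ := Nat.le_floor (by exact_mod_cast hx)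
  set n := Nat.log 2 ⌊x⌋₊ with hn
  have h1 : 2 ^ n ≤ ⌊x⌋₊ := Nat.pow_log_le_self 2 (by omega)
  have h2 : ⌊x⌋₊ < 2 ^ (n + 1) := Nat.lt_pow_succ_log_self (by norm_num) _
  have hn1 : 1 ≤ n := by
    by_contra hc
    push_neg at hc
    interval_cases n <;> omega
  refine ⟨n - 1, ?_, ?_⟩
  · have : (2:ℝ) ^ n ≤ ⌊x⌋₊ := by exact_mod_cast Nat.cast_le.mpr h1
    have hfle : (⌊x⌋₊ : ℝ) ≤ x := Nat.floor_le hx0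
    have hrw : n - 1 + 1 = n := by omega
    rw [hrw]
    linarith
  · have hlt : x < (⌊x⌋₊ : ℝ) + 1 := Nat.lt_floor_add_one x
    have : ((⌊x⌋₊ : ℕ) : ℝ) + 1 ≤ (2:ℝ) ^ (n + 1) := by
      have : (⌊x⌋₊ : ℕ) + 1 ≤ 2 ^ (n + 1) := by omega
      exact_mod_cast this
    have hrw : n - 1 + 1 + 1 = n + 1 := by omega
    rw [hrw]
    linarith

end StPAux

open StPAux

/-- The St. Petersburg distribution is not subexponential:
`liminf_{x→∞} (1-F*F(x))/(1-F(x)) = 2` while `limsup_{x→∞} (1-F*F(x))/(1-F(x)) = 4`,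
where `1 - F*F(x) = P{X₁ + X₂ > x}` for independent St. Petersburg `X₁, X₂`. -/
theorem stmt_4 {Ω : Type*} [MeasurableSpace Ω] (μ : Measure Ω) [IsProbabilityMeasure μ]
    (X₁ X₂ : Ω → ℝ) (hm₁ : Measurable X₁) (hm₂ : Measurable X₂)
    (hindep : IndepFun X₁ X₂ μ)
    (hd₁ : ∀ k : ℕ, 1 ≤ k → μ {ω | X₁ ω = 2 ^ k} = ((2 : ℝ≥0∞) ^ k)⁻¹)
    (hd₂ : ∀ k : ℕ, 1 ≤ k → μ {ω | X₂ ω = 2 ^ k} = ((2 : ℝ≥0∞) ^ k)⁻¹) :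
    liminf (fun x : ℝ =>
        (μ {ω | x < X₁ ω + X₂ ω}).toReal / (μ {ω | x < X₁ ω}).toReal) atTop = 2 ∧
    limsup (fun x : ℝ =>
        (μ {ω | x < X₁ ω + X₂ ω}).toReal / (μ {ω | x < X₁ ω}).toReal) atTop = 4 := by
  set F : ℝ → ℝ := fun x =>
    (μ {ω | x < X₁ ω + X₂ ω}).toReal / (μ {ω | x < X₁ ω}).toReal with hF
  have hFnonneg : ∀ x, 0 ≤ F x := fun x =>
    div_nonneg ENNReal.toReal_nonneg ENNReal.toReal_nonneg
  -- denominator value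
  have hden : ∀ m : ℕ, ∀ x : ℝ, 2 ^ (m+1) ≤ x → x < 2 ^ (m+1+1) →
      (μ {ω | x < X₁ ω}).toReal = ((2:ℝ) ^ (m+1))⁻¹ := by
    intro m x h1 h2
    rw [tail_gt hm₁ hd₁ h1 h2, toReal_inv_pow]
  have hpow2pos : ∀ m : ℕ, (0:ℝ) < 2 ^ m := fun m => by positivity
  -- lower bound 2 ≤ F x for x ≥ 2
  have hlb : ∀ x : ℝ, 2 ≤ x → 2 ≤ F x := by
    intro x hx
    obtain ⟨m, h1, h2⟩ := exists_pow hx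
    have hnum : ((2:ℝ) ^ m)⁻¹ ≤ (μ {ω | x < X₁ ω + X₂ ω}).toReal := by
      rw [← toReal_inv_pow m]
      exact ENNReal.toReal_mono (measure_ne_top μ _)
        (sum_lower hm₁ hm₂ hindep hd₁ hd₂ h2)
    rw [hF]
    simp only
    rw [hden m x h1 h2, le_div_iff₀ (by positivity)]
    calc 2 * ((2:ℝ) ^ (m+1))⁻¹ = ((2:ℝ) ^ m)⁻¹ := by
          rw [pow_succ]
          field_simp
      _ ≤ _ := hnum
  -- upper bound F x ≤ 4 for x ≥ 2... use x ≥ 4 to be safe on halving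
  have hub : ∀ x : ℝ, 4 ≤ x → F x ≤ 4 := by
    intro x hx
    have hx2 : 2 ≤ x / 2 := by linarith
    obtain ⟨m, h1, h2⟩ := exists_pow hx2
    have hx1 : (2:ℝ) ^ (m+1+1) ≤ x := by
      rw [pow_succ]
      linarith
    have hx2' : x < 2 ^ (m+1+1+1) := by
      rw [pow_succ]
      linarith
    have hsub : {ω | x < X₁ ω + X₂ ω} ⊆ {ω | x/2 < X₁ ω} ∪ {ω | x/2 < X₂ ω} := by
      intro ω hω
      simp only [Set.mem_setOf_eq] at hω
      by_contra hc
      simp only [Set.mem_union, Set.mem_setOf_eq, not_or, not_lt] at hc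
      linarith [hc.1, hc.2]
    have hnum : (μ {ω | x < X₁ ω + X₂ ω}).toReal ≤ 2 * ((2:ℝ) ^ (m+1))⁻¹ := by
      have hle : μ {ω | x < X₁ ω + X₂ ω} ≤
          ((2:ℝ≥0∞) ^ (m+1))⁻¹ + ((2:ℝ≥0∞) ^ (m+1))⁻¹ := by
        refine le_trans (measure_mono hsub) (le_trans (measure_union_le _ _) ?_)
        rw [tail_gt hm₁ hd₁ h1 h2, tail_gt hm₂ hd₂ h1 h2]
      calc (μ {ω | x < X₁ ω + X₂ ω}).toReal
          ≤ (((2:ℝ≥0∞) ^ (m+1))⁻¹ + ((2:ℝ≥0∞) ^ (m+1))⁻¹).toReal :=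
            ENNReal.toReal_mono (by finiteness) hle
        _ = 2 * ((2:ℝ) ^ (m+1))⁻¹ := by
            rw [ENNReal.toReal_add (by finiteness) (by finiteness), toReal_inv_pow]
            ring
    rw [hF]
    simp only
    rw [hden (m+1) x hx1 hx2', div_le_iff₀ (by positivity)]
    calc (μ {ω | x < X₁ ω + X₂ ω}).toReal ≤ 2 * ((2:ℝ) ^ (m+1))⁻¹ := hnum
      _ = 4 * ((2:ℝ) ^ (m+1+1))⁻¹ := by
          rw [pow_succ]
          field_simp
          ring
  -- F (3 * 2^m) ≤ 2
  have hthree : ∀ m : ℕ, F (3 * 2 ^ m) ≤ 2 := by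
    intro m
    have h1 : (2:ℝ) ^ (m+1) ≤ 3 * 2 ^ m := by
      rw [pow_succ]
      nlinarith [hpow2pos m]
    have h2 : (3:ℝ) * 2 ^ m < 2 ^ (m+1+1) := by
      rw [pow_succ, pow_succ]
      nlinarith [hpow2pos m]
    have hnum : (μ {ω | 3 * (2:ℝ) ^ m < X₁ ω + X₂ ω}).toReal ≤ ((2:ℝ) ^ m)⁻¹ := by
      rw [← toReal_inv_pow m]
      exact ENNReal.toReal_mono (by finiteness)
        (sum_upper_three hm₁ hm₂ hindep hd₁ hd₂ m)
    rw [hF]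
    simp only
    rw [hden m _ h1 h2, div_le_iff₀ (by positivity)]
    calc (μ {ω | 3 * (2:ℝ) ^ m < X₁ ω + X₂ ω}).toReal ≤ ((2:ℝ) ^ m)⁻¹ := hnum
      _ = 2 * ((2:ℝ) ^ (m+1))⁻¹ := by
          rw [pow_succ]
          field_simp
  -- F (2^(m+1)) ≥ 4 - 2 * (2^m)⁻¹
  have hpow : ∀ m : ℕ, 4 - 2 * ((2:ℝ) ^ m)⁻¹ ≤ F (2 ^ (m+1)) := by
    intro m
    set bR : ℝ := ((2:ℝ) ^ m)⁻¹ with hbR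
    have hbR0 : 0 < bR := by positivity
    have hbR1 : bR ≤ 1 := by
      rw [hbR]
      exact inv_le_one_of_one_le₀ (one_le_pow₀ one_le_two)
    have h1 : (2:ℝ) ^ (m+1) ≤ 2 ^ (m+1) := le_refl _
    have h2 : (2:ℝ) ^ (m+1) < 2 ^ (m+1+1) := by
      exact pow_lt_pow_right₀ one_lt_two (by omega)
    have hnum : bR + (1 - bR) * bR ≤ (μ {ω | (2:ℝ) ^ (m+1) < X₁ ω + X₂ ω}).toReal := by
      have := sum_lower_pow hm₁ hm₂ hindep hd₁ hd₂ m
      have htr : ((((2:ℝ≥0∞) ^ m)⁻¹ + (1 - ((2:ℝ≥0∞) ^ m)⁻¹) * ((2:ℝ≥0∞) ^ m)⁻¹)).toReal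
          = bR + (1 - bR) * bR := by
        rw [ENNReal.toReal_add (by finiteness) (by finiteness), ENNReal.toReal_mul,
          ENNReal.toReal_sub_of_le (inv_pow_le_one m) ENNReal.one_ne_top,
          ENNReal.toReal_one, toReal_inv_pow]
      rw [← htr]
      exact ENNReal.toReal_mono (measure_ne_top μ _) this
    rw [hF]
    simp only
    rw [hden m _ h1 h2, le_div_iff₀ (by positivity)]
    calc (4 - 2 * bR) * ((2:ℝ) ^ (m+1))⁻¹ = (4 - 2*bR) * (bR / 2) := by
          rw [pow_succ, hbR]
          field_simp
      _ = bR + (1 - bR) * bR := by ring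
      _ ≤ _ := hnum
  -- boundedness facts
  have hbdd_le : IsBoundedUnder (· ≤ ·) atTop F := by
    refine ⟨4, eventually_map.mpr ?_⟩
    filter_upwards [eventually_ge_atTop (4:ℝ)] with x hx
    exact hub x hx
  have hbdd_ge : IsBoundedUnder (· ≥ ·) atTop F := by
    exact ⟨0, eventually_map.mpr (Eventually.of_forall fun x => hFnonneg x)⟩
  constructor
  · -- liminf = 2
    refine le_antisymm ?_ ?_
    · refine liminf_le_of_frequently_le ?_ hbdd_ge
      rw [frequently_atTop]
      intro b
      obtain ⟨m, hm⟩ := pow_unbounded_of_one_lt b (one_lt_two : (1:ℝ) < 2)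
      refine ⟨3 * 2 ^ m, ?_, hthree m⟩
      nlinarith [hpow2pos m]
    · refine le_liminf_of_le hbdd_le.isCoboundedUnder_ge ?_
      filter_upwards [eventually_ge_atTop (2:ℝ)] with x hx using hlb x hx
  · -- limsup = 4
    refine le_antisymm ?_ ?_
    · refine limsup_le_of_le hbdd_ge.isCoboundedUnder_le ?_
      filter_upwards [eventually_ge_atTop (4:ℝ)] with x hx using hub x hx
    · refine le_of_forall_sub_le ?_
      intro ε hε
      refine le_limsup_of_frequently_le ?_ hbdd_le
      rw [frequently_atTop]
      intro b
      obtain ⟨m, hm⟩ := pow_unbounded_of_one_lt (max b (2/ε)) (one_lt_two : (1:ℝ) < 2)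
      have hmb : b < 2 ^ m := lt_of_le_of_lt (le_max_left _ _) hm
      have hmε : 2 / ε < 2 ^ m := lt_of_le_of_lt (le_max_right _ _) hm
      refine ⟨2 ^ (m+1), ?_, ?_⟩
      · have : (2:ℝ) ^ m ≤ 2 ^ (m+1) := pow_le_pow_right₀ one_le_two (by omega)
        linarith
      · have hkey : 2 * ((2:ℝ) ^ m)⁻¹ ≤ ε := by
          have h2 : 2 < 2 ^ m * ε := by
            rw [div_lt_iff₀ hε] at hmε
            linarith
          rw [mul_inv_le_iff₀ (hpow2pos m)]
          nlinarith
        calc 4 - ε ≤ 4 - 2 * ((2:ℝ) ^ m)⁻¹ := by linarith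
          _ ≤ F (2 ^ (m+1)) := hpow m
end

section
/- Let Sₙ be the sum of n i.i.d. St. Petersburg random variables. For every n ≥ 1 and every δ ∈ (0,1), lim P{Sₙ > x}/P{X₁ > x} = n as x → ∞ along x with fractional part {log₂ x} ≥ δ. -/
/-!
On `[2 ^ L, 2 ^ (L + 1))` the tail `P{X > x}` is constant, equal to `2 ^ (-L)`. The summands
are nonnegative, so Bonferroni's inequality gives `P{Sₙ > x} ≥ n 2 ^ (-L) - n² 2 ^ (-2L)`.
Conversely, put `t = 2 ^ (L - r)`: if `Sₙ > x`, either two summands exceed `t`, which has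
probability at most `n² t⁻²` by independence, or one summand exceeds `x - (n - 1) t`. When
`{log₂ x} ≥ δ` and `r` is large in terms of `n` and `δ`, this threshold still lies in
`[2 ^ L, 2 ^ (L + 1))`, so the second event has probability at most `n 2 ^ (-L)`. Hence the ratio
is within `n² 4 ^ r 2 ^ (-L) = O(1 / x)` of `n`.
-/

open MeasureTheory ProbabilityTheory Filter Topology
open scoped ENNReal

lemma ENNReal.tsum_inv_two_pow_add (m : ℕ) :
    ∑' k : ℕ, ((2 : ℝ≥0∞) ^ (m + k))⁻¹ = 2 * ((2 : ℝ≥0∞) ^ m)⁻¹ := by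
  have h (k : ℕ) : ((2 : ℝ≥0∞) ^ (m + k))⁻¹ = (2 ^ m)⁻¹ * 2⁻¹ ^ k := by
    rw [pow_add, ENNReal.mul_inv (by simp) (by simp), ENNReal.inv_pow (n := k)]
  simp_rw [h, ENNReal.tsum_mul_left, ENNReal.tsum_geometric_two, mul_comm]

section Bonferroni

variable {Ω ι : Type*} [MeasurableSpace Ω] {μ : Measure Ω} [IsFiniteMeasure μ] [DecidableEq ι]

theorem MeasureTheory.sum_measureReal_le_measureReal_biUnion_add_sum_inter {A : ι → Set Ω}
    (hA : ∀ i, MeasurableSet (A i)) (s : Finset ι) :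
    ∑ i ∈ s, μ.real (A i) ≤
      μ.real (⋃ i ∈ s, A i) + ∑ i ∈ s, ∑ j ∈ s.erase i, μ.real (A i ∩ A j) := by
  induction s using Finset.cons_induction with
  | empty => simp
  | cons a t ha ih =>
    have h_union : μ.real (A a) + μ.real (⋃ i ∈ t, A i) ≤
        μ.real (⋃ i ∈ Finset.cons a t ha, A i) + ∑ j ∈ t, μ.real (A a ∩ A j) := by
      rw [← measureReal_union_add_inter' (hA a) (measure_ne_top _ _) (measure_ne_top _ _),
        Finset.cons_eq_insert, Finset.set_biUnion_insert, Set.inter_iUnion₂]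
      gcongr
      exact measureReal_biUnion_finset_le _ _
    have h_pairs : ∑ i ∈ t, ∑ j ∈ t.erase i, μ.real (A i ∩ A j) ≤
        ∑ i ∈ t, ∑ j ∈ (Finset.cons a t ha).erase i, μ.real (A i ∩ A j) :=
      Finset.sum_le_sum fun i _ ↦ Finset.sum_le_sum_of_subset_of_nonneg
        (Finset.erase_subset_erase _ (Finset.subset_cons ha)) fun _ _ _ ↦ measureReal_nonneg
    rw [Finset.sum_cons, Finset.sum_cons, Finset.erase_cons]
    linarith

end Bonferroni

lemma lt_pow_iff_of_mem_Ico {b y : ℝ} (hb : 1 < b) {L m : ℕ}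
    (hy : y ∈ Set.Ico (b ^ L) (b ^ (L + 1))) :
    y < b ^ m ↔ L < m :=
  ⟨fun h ↦ (pow_lt_pow_iff_right₀ hb).mp (hy.1.trans_lt h),
    fun h ↦ hy.2.trans_le (pow_le_pow_right₀ hb.le h)⟩

theorem Finset.exists_two_lt_or_exists_sub_lt_of_lt_sum {ι : Type*} [DecidableEq ι] {s : Finset ι}
    (hs : s.Nonempty) {a : ι → ℝ} {x t : ℝ} (h : x < ∑ i ∈ s, a i) :
    (∃ i ∈ s, ∃ j ∈ s.erase i, t < a i ∧ t < a j) ∨ ∃ i ∈ s, x - (s.card - 1) * t < a i := by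
  by_cases h_two : ∃ i ∈ s, ∃ j ∈ s.erase i, t < a i ∧ t < a j
  · exact .inl h_two
  right
  push Not at h_two
  -- take a summand exceeding `t` if there is one, any index otherwise
  obtain ⟨i, hi, h_rest⟩ : ∃ i ∈ s, ∀ j ∈ s.erase i, a j ≤ t := by
    by_cases h_one : ∃ i ∈ s, t < a i
    · obtain ⟨i, hi, hti⟩ := h_one
      exact ⟨i, hi, fun j hj ↦ h_two i hi j hj hti⟩
    · push Not at h_one
      obtain ⟨i, hi⟩ := hs
      exact ⟨i, hi, fun j hj ↦ h_one j (Finset.mem_of_mem_erase hj)⟩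
  refine ⟨i, hi, ?_⟩
  have h_sum := Finset.sum_le_card_nsmul _ _ _ h_rest
  rw [Finset.card_erase_of_mem hi, nsmul_eq_mul, Nat.cast_pred (Finset.card_pos.mpr ⟨i, hi⟩)]
    at h_sum
  linarith [Finset.add_sum_erase s a hi]

section StPetersburg

variable {Ω : Type*} [MeasurableSpace Ω]

def HasStPetersburgLaw (Y : Ω → ℝ) (μ : Measure Ω) : Prop :=
  ∀ k : ℕ, 1 ≤ k → μ {ω | Y ω = 2 ^ k} = ((2 : ℝ≥0∞) ^ k)⁻¹

variable {μ : Measure Ω} {Y : Ω → ℝ}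

lemma measure_iUnion_eq_two_pow_add (hY : Measurable Y) (hdY : HasStPetersburgLaw Y μ) {m : ℕ}
    (hm : 1 ≤ m) :
    μ (⋃ k : ℕ, {ω | Y ω = 2 ^ (m + k)}) = 2 * ((2 : ℝ≥0∞) ^ m)⁻¹ := by
  have h_disj : Pairwise (Function.onFun Disjoint fun k : ℕ ↦ {ω | Y ω = (2 : ℝ) ^ (m + k)}) := by
    intro j k hjk
    refine Disjoint.preimage Y (Set.disjoint_singleton.mpr ?_)
    rw [Ne, pow_right_inj₀ two_pos (by norm_num)]
    omega
  rw [measure_iUnion h_disj fun k ↦ hY (measurableSet_singleton _),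
    tsum_congr fun k ↦ hdY (m + k) (by omega)]
  exact ENNReal.tsum_inv_two_pow_add m

variable [IsProbabilityMeasure μ]

lemma ae_exists_eq_two_pow (hY : Measurable Y) (hdY : HasStPetersburgLaw Y μ) :
    ∀ᵐ ω ∂μ, ∃ k : ℕ, Y ω = 2 ^ (1 + k) := by
  have h_meas : MeasurableSet (⋃ k : ℕ, {ω | Y ω = (2 : ℝ) ^ (1 + k)}) :=
    .iUnion fun k ↦ hY (measurableSet_singleton _)
  have h := (ae_mem_iff_measure_eq h_meas.nullMeasurableSet).mpr (by
    rw [measure_iUnion_eq_two_pow_add hY hdY le_rfl, measure_univ, pow_one,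
      ENNReal.mul_inv_cancel two_ne_zero ENNReal.ofNat_ne_top])
  simpa only [Set.mem_iUnion, Set.mem_ofPred_eq] using h

lemma measureReal_lt_eq_of_mem_Ico (hY : Measurable Y) (hdY : HasStPetersburgLaw Y μ)
    {L : ℕ} {y : ℝ} (hy : y ∈ Set.Ico ((2 : ℝ) ^ L) (2 ^ (L + 1))) :
    μ.real {ω | y < Y ω} = ((2 : ℝ) ^ L)⁻¹ := by
  have h_ae : {ω | y < Y ω} =ᵐ[μ] ⋃ j : ℕ, {ω | Y ω = 2 ^ (L + 1 + j)} := by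
    rw [Filter.eventuallyEq_set]
    filter_upwards [ae_exists_eq_two_pow hY hdY] with ω ⟨k, hk⟩
    simp only [Set.mem_ofPred_eq, Set.mem_iUnion, hk, lt_pow_iff_of_mem_Ico one_lt_two hy,
      pow_right_inj₀ two_pos (by norm_num : (2 : ℝ) ≠ 1)]
    exact ⟨fun h ↦ ⟨k - L, by omega⟩, fun ⟨j, hj⟩ ↦ by omega⟩
  rw [measureReal_def, measure_congr h_ae, measure_iUnion_eq_two_pow_add hY hdY (by omega)]
  simp [pow_succ]

end StPetersburg

section Sum

open Finset

variable {Ω : Type*} [MeasurableSpace Ω] {μ : Measure Ω}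

lemma sum_measureReal_inter_le_of_iIndepFun {ι : Type*} [DecidableEq ι] {X : ι → Ω → ℝ}
    (hX : iIndepFun X μ) {c p : ℝ} (hp : ∀ i, μ.real {ω | c < X i ω} = p) (s : Finset ι) :
    ∑ i ∈ s, ∑ j ∈ s.erase i, μ.real ({ω | c < X i ω} ∩ {ω | c < X j ω}) ≤
      (s.card : ℝ) ^ 2 * p ^ 2 := by
  have h_pair : ∀ i ∈ s, ∀ j ∈ s.erase i,
      μ.real ({ω | c < X i ω} ∩ {ω | c < X j ω}) = p ^ 2 := by
    intro i _ j hj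
    change (μ (X i ⁻¹' Set.Ioi c ∩ X j ⁻¹' Set.Ioi c)).toReal = p ^ 2
    rw [(hX.indepFun (Finset.ne_of_mem_erase hj).symm).measure_inter_preimage_eq_mul
      _ _ measurableSet_Ioi measurableSet_Ioi, ENNReal.toReal_mul]
    exact (congr_arg₂ (· * ·) (hp i) (hp j)).trans (sq p).symm
  calc ∑ i ∈ s, ∑ j ∈ s.erase i, μ.real ({ω | c < X i ω} ∩ {ω | c < X j ω})
      = ∑ i ∈ s, ∑ j ∈ s.erase i, p ^ 2 := sum_congr rfl fun i hi ↦ sum_congr rfl (h_pair i hi)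
    _ ≤ ∑ i ∈ s, ∑ j ∈ s, p ^ 2 :=
      sum_le_sum fun i _ ↦ sum_le_sum_of_subset_of_nonneg (erase_subset _ _) fun _ _ _ ↦ sq_nonneg p
    _ = (s.card : ℝ) ^ 2 * p ^ 2 := by simp only [sum_const, nsmul_eq_mul]; ring

variable [IsProbabilityMeasure μ] {X : ℕ → Ω → ℝ}

lemma measureReal_lt_sum_le (hm : ∀ i, Measurable (X i)) (hindep : iIndepFun X μ)
    (hd : ∀ i, HasStPetersburgLaw (X i) μ) {n L T : ℕ} (hn : 1 ≤ n) {x : ℝ} (hx : x < 2 ^ (L + 1))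
    (hy : 2 ^ L ≤ x - (n - 1) * 2 ^ T) :
    μ.real {ω | x < ∑ i ∈ range n, X i ω} ≤
      n * ((2 : ℝ) ^ L)⁻¹ + n ^ 2 * (((2 : ℝ) ^ T)⁻¹) ^ 2 := by
  set t : ℝ := 2 ^ T
  set y := x - (n - 1) * t
  have hy_mem : y ∈ Set.Ico ((2 : ℝ) ^ L) (2 ^ (L + 1)) := by
    refine ⟨hy, lt_of_le_of_lt (sub_le_self _ (mul_nonneg ?_ (by positivity))) hx⟩
    simpa using (Nat.one_le_cast (α := ℝ)).mpr hn
  have h_cover : {ω | x < ∑ i ∈ range n, X i ω} ⊆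
      (⋃ i ∈ range n, ⋃ j ∈ (range n).erase i, {ω | t < X i ω} ∩ {ω | t < X j ω}) ∪
        ⋃ i ∈ range n, {ω | y < X i ω} := by
    intro ω hω
    rcases exists_two_lt_or_exists_sub_lt_of_lt_sum (nonempty_range_iff.mpr (by omega)) hω with
      ⟨i, hi, j, hj, hti, htj⟩ | ⟨i, hi, hyi⟩
    · exact .inl (Set.mem_biUnion hi (Set.mem_biUnion hj ⟨hti, htj⟩))
    · rw [card_range] at hyi
      exact .inr (Set.mem_biUnion hi hyi)
  calc μ.real {ω | x < ∑ i ∈ range n, X i ω}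
      ≤ μ.real (⋃ i ∈ range n, ⋃ j ∈ (range n).erase i, {ω | t < X i ω} ∩ {ω | t < X j ω}) +
          μ.real (⋃ i ∈ range n, {ω | y < X i ω}) :=
        (measureReal_mono h_cover).trans (measureReal_union_le _ _)
    _ ≤ ∑ i ∈ range n, ∑ j ∈ (range n).erase i, μ.real ({ω | t < X i ω} ∩ {ω | t < X j ω}) +
          ∑ i ∈ range n, μ.real {ω | y < X i ω} :=
        add_le_add ((measureReal_biUnion_finset_le _ _).trans
          (sum_le_sum fun i _ ↦ measureReal_biUnion_finset_le _ _))
          (measureReal_biUnion_finset_le _ _)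
    _ ≤ n ^ 2 * t⁻¹ ^ 2 + ∑ i ∈ range n, ((2 : ℝ) ^ L)⁻¹ := by
        gcongr with i
        · simpa using sum_measureReal_inter_le_of_iIndepFun hindep
            (fun i ↦ measureReal_lt_eq_of_mem_Ico (hm i) (hd i)
              ⟨le_rfl, pow_lt_pow_right₀ one_lt_two T.lt_succ_self⟩) (range n)
        · exact (measureReal_lt_eq_of_mem_Ico (hm i) (hd i) hy_mem).le
    _ = _ := by simp only [sum_const, card_range, nsmul_eq_mul]; ring

lemma le_measureReal_lt_sum (hm : ∀ i, Measurable (X i)) (hindep : iIndepFun X μ)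
    (hd : ∀ i, HasStPetersburgLaw (X i) μ) (n : ℕ) {L : ℕ} {x : ℝ}
    (hx : x ∈ Set.Ico ((2 : ℝ) ^ L) (2 ^ (L + 1))) :
    n * ((2 : ℝ) ^ L)⁻¹ - n ^ 2 * (((2 : ℝ) ^ L)⁻¹) ^ 2 ≤
      μ.real {ω | x < ∑ i ∈ range n, X i ω} := by
  have h_tail (i : ℕ) := measureReal_lt_eq_of_mem_Ico (hm i) (hd i) hx
  have h_nonneg : ∀ᵐ ω ∂μ, ∀ i, 0 ≤ X i ω := ae_all_iff.mpr fun i ↦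
    (ae_exists_eq_two_pow (hm i) (hd i)).mono fun ω ⟨k, hk⟩ ↦ hk ▸ by positivity
  have h_union : (⋃ i ∈ range n, {ω | x < X i ω}) ≤ᵐ[μ] {ω | x < ∑ i ∈ range n, X i ω} := by
    filter_upwards [h_nonneg] with ω hω (h : ω ∈ ⋃ i ∈ range n, {ω | x < X i ω})
    obtain ⟨i, hi, hxi⟩ : ∃ i ∈ range n, x < X i ω := by simpa using h
    exact hxi.trans_le (single_le_sum (fun j _ ↦ hω j) hi)
  have h_bonf := sum_measureReal_le_measureReal_biUnion_add_sum_inter (μ := μ)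
    (A := fun i ↦ {ω | x < X i ω}) (fun i ↦ (hm i) measurableSet_Ioi) (range n)
  have h_pairs := sum_measureReal_inter_le_of_iIndepFun hindep h_tail (range n)
  have h_mono := ENNReal.toReal_mono (measure_ne_top _ _) (measure_mono_ae h_union)
  simp only [h_tail, sum_const, card_range, nsmul_eq_mul] at h_bonf h_pairs
  rw [← measureReal_def, ← measureReal_def] at h_mono
  linarith

lemma abs_div_measureReal_lt_sub_le (hm : ∀ i, Measurable (X i)) (hindep : iIndepFun X μ)
    (hd : ∀ i, HasStPetersburgLaw (X i) μ) {n r L : ℕ} (hn : 1 ≤ n) (hrL : r ≤ L) {x : ℝ}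
    (hx : 2 ^ L * (1 + (n - 1) / 2 ^ r) ≤ x) (hx' : x < 2 ^ (L + 1)) :
    |μ.real {ω | x < ∑ i ∈ range n, X i ω} / μ.real {ω | x < X 0 ω} - n| ≤
      n ^ 2 * 4 ^ r / 2 ^ L := by
  have hn' : (1 : ℝ) ≤ n := Nat.one_le_cast.mpr hn
  have h2L : (0 : ℝ) < 2 ^ L := by positivity
  have h2r : (1 : ℝ) ≤ 2 ^ r := one_le_pow₀ one_le_two
  have h2T : (2 : ℝ) ^ (L - r) = 2 ^ L / 2 ^ r := pow_sub₀ _ two_ne_zero hrL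
  have hxL : x ∈ Set.Ico ((2 : ℝ) ^ L) (2 ^ (L + 1)) :=
    ⟨le_trans (le_mul_of_one_le_right h2L.le (le_add_of_nonneg_right (by positivity))) hx, hx'⟩
  have h_up := measureReal_lt_sum_le hm hindep hd (T := L - r) hn hx' (by
    rw [h2T]
    linarith [show (2 : ℝ) ^ L * (1 + (n - 1) / 2 ^ r) = 2 ^ L + (n - 1) * (2 ^ L / 2 ^ r) by ring])
  have h_low := le_measureReal_lt_sum hm hindep hd n hxL
  rw [measureReal_lt_eq_of_mem_Ico (hm 0) (hd 0) hxL, div_inv_eq_mul, abs_sub_le_iff]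
  rw [h2T] at h_up
  rw [show (4 : ℝ) ^ r = (2 ^ r) ^ 2 by rw [← pow_mul, mul_comm, pow_mul]; norm_num]
  generalize μ.real {ω | x < ∑ i ∈ range n, X i ω} = S at h_up h_low ⊢
  generalize (2 : ℝ) ^ L = a at h2L h_up h_low ⊢
  generalize (2 : ℝ) ^ r = b at h2r h_up ⊢
  have h_up' : S * a ≤ n + n ^ 2 * b ^ 2 / a := by
    have := mul_le_mul_of_nonneg_right h_up h2L.le
    field_simp at this ⊢
    linarith
  have h_low' : n - n ^ 2 / a ≤ S * a := by
    have := mul_le_mul_of_nonneg_right h_low h2L.le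
    field_simp at this ⊢
    linarith
  have h_le : n ^ 2 / a ≤ n ^ 2 * b ^ 2 / a := by
    gcongr
    exact le_mul_of_one_le_right (by positivity) (one_le_pow₀ h2r)
  constructor <;> linarith

end Sum

lemma exists_two_pow_mul_rpow_le_of_le_fract_logb {x δ : ℝ} (hx : 1 ≤ x)
    (h : δ ≤ Int.fract (Real.logb 2 x)) : ∃ L : ℕ, 2 ^ L * 2 ^ δ ≤ x ∧ x < 2 ^ (L + 1) := by
  have h_log : 0 ≤ Real.logb 2 x := Real.logb_nonneg one_lt_two hx
  have h_pow : (2 : ℝ) ^ Real.logb 2 x = x := Real.rpow_logb two_pos (by norm_num) (by linarith)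
  set L := ⌊Real.logb 2 x⌋₊
  rw [Int.fract, ← natCast_floor_eq_intCast_floor h_log] at h
  refine ⟨L, ?_, ?_⟩
  · calc (2 : ℝ) ^ L * 2 ^ δ = 2 ^ (L + δ) := by rw [Real.rpow_add two_pos, Real.rpow_natCast]
      _ ≤ 2 ^ Real.logb 2 x := Real.rpow_le_rpow_of_exponent_le one_le_two (by linarith)
      _ = x := h_pow
  · calc x = 2 ^ Real.logb 2 x := h_pow.symm
      _ < 2 ^ ((L : ℝ) + 1) := Real.rpow_lt_rpow_of_exponent_lt one_lt_two (Nat.lt_floor_add_one _)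
      _ = 2 ^ (L + 1) := by norm_cast

/-- For `Sₙ` the sum of `n` i.i.d. St. Petersburg random variables, `n ≥ 1` and
`δ ∈ (0,1)`: `P{Sₙ > x}/P{X₁ > x} → n` as `x → ∞` along `{log₂ x} ≥ δ`. -/
theorem stmt_7 {Ω : Type*} [MeasurableSpace Ω] (μ : Measure Ω) [IsProbabilityMeasure μ]
    (X : ℕ → Ω → ℝ) (hm : ∀ i, Measurable (X i))
    (hindep : iIndepFun X μ)
    (hd : ∀ i, ∀ k : ℕ, 1 ≤ k → μ {ω | X i ω = 2 ^ k} = ((2 : ℝ≥0∞) ^ k)⁻¹)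
    (n : ℕ) (hn : 1 ≤ n) (δ : ℝ) (hδ : δ ∈ Set.Ioo (0 : ℝ) 1) :
    Tendsto (fun x : ℝ =>
        (μ {ω | x < ∑ i ∈ Finset.range n, X i ω}).toReal /
          (μ {ω | x < X 0 ω}).toReal)
      (atTop ⊓ 𝓟 {x : ℝ | δ ≤ Int.fract (Real.logb 2 x)}) (𝓝 n) := by
  obtain ⟨r, hr⟩ : ∃ r : ℕ, ((n : ℝ) - 1) / 2 ^ r ≤ 2 ^ δ - 1 :=
    (((tendsto_pow_atTop_atTop_of_one_lt one_lt_two).const_div_atTop _).eventually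
      (ge_mem_nhds (by linarith [Real.one_lt_rpow one_lt_two hδ.1]))).exists
  rw [← tendsto_sub_nhds_zero_iff]
  refine squeeze_zero_norm' ?_
    ((tendsto_id.const_div_atTop (2 * (n : ℝ) ^ 2 * 4 ^ r)).mono_left inf_le_left)
  filter_upwards [(eventually_ge_atTop ((2 : ℝ) ^ r)).filter_mono inf_le_left,
    mem_inf_of_right (mem_principal_self _)] with x hxr hxδ
  obtain ⟨L, hxL, hxL'⟩ :=
    exists_two_pow_mul_rpow_le_of_le_fract_logb ((one_le_pow₀ one_le_two).trans hxr) hxδ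
  have hrL : r ≤ L :=
    Nat.lt_succ_iff.mp ((pow_lt_pow_iff_right₀ one_lt_two).mp (hxr.trans_lt hxL'))
  have hx : (2 : ℝ) ^ L * (1 + (n - 1) / 2 ^ r) ≤ x := by
    refine le_trans ?_ hxL
    gcongr
    linarith
  calc ‖_‖ ≤ (n : ℝ) ^ 2 * 4 ^ r / 2 ^ L :=
        abs_div_measureReal_lt_sub_le hm hindep hd hn hrL hx hxL'
    _ = 2 * n ^ 2 * 4 ^ r / 2 ^ (L + 1) := by rw [pow_succ]; ring
    _ ≤ 2 * n ^ 2 * 4 ^ r / x := by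
        gcongr
        exact (one_le_pow₀ one_le_two).trans hxr |>.trans_lt' one_pos
end

section
/- For every real γ ∈ (1/2, 1] with binary expansion γ = Σ_{k≥1} ε_k 2^{-k} containing infinitely many 1's, the series f(γ) = Σ_{m≥1} (⌈2^m γ⌉ - 2^m γ)/(2^m γ) converges and equals 1/γ + 1 - (1/γ)·Σ_{k≥1} k·ε_k·2^{-k}. -/
/-!
Split `γ` after its `n`-th binary digit: `2ⁿγ = N + 2ⁿ Tₙ₊₁` with `N` an integer and
`Tₙ₊₁ = Σ_{k>n} ε_k 2^{-k}` the tail of the expansion. Since infinitely many digits are `1`,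
`0 < 2ⁿ Tₙ₊₁ ≤ 1`, so `⌈2ⁿγ⌉ = N + 1` and the `n`-th term of the series is
`(2^{-n} - Tₙ₊₁)/γ`. The geometric part sums to `1`, while exchanging the order of summation
gives `Σ_{n≥1} Tₙ₊₁ = Σ_k (k - 1) ε_k 2^{-k} = Σ_k k ε_k 2^{-k} - γ`.
-/

open Finset

theorem hasSum_tsum_nat_add_succ {a : ℕ → ℝ} {S : ℝ} (ha : ∀ k, 0 ≤ a k)
    (h : HasSum (fun k : ℕ => k * a k) S) :
    HasSum (fun n => ∑' k, a (k + (n + 1))) S := by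
  -- `F (j, n) = a j` for `n < j`: the column `j` sums to `j * a j`, the row `n` to the tail.
  let F : ℕ × ℕ → ℝ := fun p => if p.2 < p.1 then a p.1 else 0
  have hcol : ∀ j, HasSum (fun n => F (j, n)) (j * a j) := fun j => by
    have hfin : ∑ n ∈ range j, F (j, n) = j * a j := by
      rw [sum_congr rfl fun n hn => if_pos (mem_range.1 hn)]
      simp
    exact hfin ▸ hasSum_sum_of_ne_finset_zero fun n hn => if_neg (by simpa using hn)
  have hrow : ∀ n, HasSum (fun j => F (j, n)) (∑' k, a (k + (n + 1))) := fun n => by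
    have htail : Summable fun k => a (k + (n + 1)) :=
      ((summable_nat_add_iff (n + 1)).2 h.summable).of_nonneg_of_le (fun k => ha _)
        fun k => le_mul_of_one_le_left (ha _) (by norm_cast; omega)
    have hshift : HasSum (fun k => F (k + (n + 1), n)) (∑' k, a (k + (n + 1))) :=
      htail.hasSum.congr_fun fun k => if_pos (by omega)
    have hhead : ∑ i ∈ range (n + 1), F (i, n) = 0 :=
      sum_eq_zero fun i hi => if_neg (by simp at hi; omega)
    have := (hasSum_nat_add_iff (f := fun j => F (j, n)) (n + 1)).1 hshift
    rwa [hhead, add_zero] at this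
  have hF : Summable F :=
    (summable_prod_of_nonneg fun p => by dsimp only [F]; split_ifs <;> simp [ha]).2
      ⟨fun j => (hcol j).summable, by simpa only [fun j => (hcol j).tsum_eq] using h.summable⟩
  have hFS : HasSum F S := by
    rw [← h.tsum_eq, ← tsum_congr fun j => (hcol j).tsum_eq, ← hF.tsum_prod]
    exact hF.hasSum
  exact ((Equiv.prodComm ℕ ℕ).hasSum_iff.2 hFS).prod_fiberwise hrow

theorem exists_int_eq_two_pow_mul_sum_range {ε : ℕ → ℝ} (hε : ∀ k, ∃ z : ℤ, ε k = z)
    (n : ℕ) : ∃ N : ℤ, 2 ^ n * ∑ k ∈ range (n + 1), ε k / 2 ^ k = N := by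
  induction n with
  | zero => simpa using hε 0
  | succ n ih =>
    obtain ⟨N, hN⟩ := ih
    obtain ⟨z, hz⟩ := hε (n + 1)
    refine ⟨2 * N + z, ?_⟩
    rw [sum_range_succ, mul_add, pow_succ, mul_comm _ (2 : ℝ), mul_assoc, hN, hz]
    push_cast
    field_simp

noncomputable def binaryTail (ε : ℕ → ℝ) (n : ℕ) : ℝ := ∑' k, ε (k + n) / 2 ^ (k + n)

section Digits

variable {ε : ℕ → ℝ} {γ : ℝ}

theorem digit_nonneg (hbit : ∀ k, ε k = 0 ∨ ε k = 1) (k : ℕ) : 0 ≤ ε k := by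
  rcases hbit k with h | h <;> simp [h]

theorem digit_le_one (hbit : ∀ k, ε k = 0 ∨ ε k = 1) (k : ℕ) : ε k ≤ 1 := by
  rcases hbit k with h | h <;> simp [h]

theorem summable_digit_div_two_pow (hbit : ∀ k, ε k = 0 ∨ ε k = 1) :
    Summable fun k => ε k / 2 ^ k :=
  summable_geometric_two.of_nonneg_of_le (fun k => div_nonneg (digit_nonneg hbit k) (by positivity))
    fun k => by rw [div_pow, one_pow]; gcongr; exact digit_le_one hbit k

theorem summable_mul_digit_div_two_pow (hbit : ∀ k, ε k = 0 ∨ ε k = 1) :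
    Summable fun k : ℕ => k * ε k / 2 ^ k := by
  have hgeom : Summable fun k : ℕ => (k : ℝ) * (1 / 2) ^ k := by
    simpa using summable_pow_mul_geometric_of_norm_lt_one (R := ℝ) 1
      (r := 1 / 2) (by norm_num [abs_of_pos])
  refine hgeom.of_nonneg_of_le (fun k => by have := digit_nonneg hbit k; positivity) fun k => ?_
  rw [mul_div_assoc, div_pow, one_pow]
  gcongr
  exact digit_le_one hbit k

theorem sum_range_add_binaryTail (hbit : ∀ k, ε k = 0 ∨ ε k = 1)
    (hexp : HasSum (fun k => ε k / 2 ^ k) γ) (n : ℕ) :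
    ∑ k ∈ range n, ε k / 2 ^ k + binaryTail ε n = γ :=
  hexp.tsum_eq ▸ (summable_digit_div_two_pow hbit).sum_add_tsum_nat_add n

theorem binaryTail_pos (hbit : ∀ k, ε k = 0 ∨ ε k = 1) (hinf : ∀ m : ℕ, ∃ k > m, ε k = 1)
    (n : ℕ) : 0 < binaryTail ε n := by
  obtain ⟨k, hkn, hk⟩ := hinf n
  refine ((summable_nat_add_iff n).2 (summable_digit_div_two_pow hbit)).tsum_pos
    (fun j => div_nonneg (digit_nonneg hbit _) (by positivity)) (k - n) ?_
  rw [Nat.sub_add_cancel hkn.le, hk]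
  positivity

theorem binaryTail_succ_le (hbit : ∀ k, ε k = 0 ∨ ε k = 1) (n : ℕ) :
    binaryTail ε (n + 1) ≤ 1 / 2 ^ n := by
  calc binaryTail ε (n + 1) ≤ ∑' k, 1 / 2 ^ n / 2 / 2 ^ k := by
        refine ((summable_nat_add_iff (n + 1)).2 (summable_digit_div_two_pow hbit)).tsum_le_tsum
          (fun k => ?_) (summable_geometric_two' _)
        calc ε (k + (n + 1)) / 2 ^ (k + (n + 1)) ≤ 1 / 2 ^ (k + (n + 1)) := by
              gcongr
              exact digit_le_one hbit _
          _ = 1 / 2 ^ n / 2 / 2 ^ k := by rw [pow_add, pow_succ]; ring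
    _ = 1 / 2 ^ n := tsum_geometric_two' _

theorem ceil_two_pow_mul_sub_self (hbit : ∀ k, ε k = 0 ∨ ε k = 1)
    (hexp : HasSum (fun k => ε k / 2 ^ k) γ) (hinf : ∀ m : ℕ, ∃ k > m, ε k = 1) (n : ℕ) :
    (⌈(2 : ℝ) ^ n * γ⌉ : ℝ) - 2 ^ n * γ = 1 - 2 ^ n * binaryTail ε (n + 1) := by
  obtain ⟨N, hN⟩ := exists_int_eq_two_pow_mul_sum_range (ε := ε)
    (fun k => (hbit k).elim (fun h => ⟨0, by simp [h]⟩) fun h => ⟨1, by simp [h]⟩) n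
  have hsplit : 2 ^ n * γ = N + 2 ^ n * binaryTail ε (n + 1) := by
    rw [← sum_range_add_binaryTail hbit hexp (n + 1), mul_add, hN]
  have htail_pos : 0 < 2 ^ n * binaryTail ε (n + 1) :=
    mul_pos (by positivity) (binaryTail_pos hbit hinf _)
  have htail_le : 2 ^ n * binaryTail ε (n + 1) ≤ 1 := by
    have := binaryTail_succ_le hbit n
    rwa [le_div_iff₀ (by positivity), mul_comm] at this
  rw [hsplit, Int.ceil_eq_on_Ioc (N + 1) _ ⟨by push_cast; linarith, by push_cast; linarith⟩]
  push_cast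
  ring

theorem hasSum_binaryTail_add_two (hε0 : ε 0 = 0) (hbit : ∀ k, ε k = 0 ∨ ε k = 1)
    (hexp : HasSum (fun k => ε k / 2 ^ k) γ) :
    HasSum (fun m => binaryTail ε (m + 2)) ((∑' k : ℕ, k * ε k / 2 ^ k) - γ) := by
  have hK : HasSum (fun k : ℕ => k * (ε k / 2 ^ k)) (∑' k : ℕ, k * ε k / 2 ^ k) := by
    simpa only [mul_div_assoc] using (summable_mul_digit_div_two_pow hbit).hasSum
  have htails := hasSum_tsum_nat_add_succ
    (fun k => div_nonneg (digit_nonneg hbit k) (by positivity)) hK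
  have hT1 : binaryTail ε 1 = γ := by
    simpa [hε0] using sum_range_add_binaryTail hbit hexp 1
  have := (hasSum_nat_add_iff' (f := fun n => binaryTail ε (n + 1)) 1).2 htails
  rwa [sum_range_one, zero_add, hT1] at this

end Digits

/-- For `γ ∈ (1/2,1]` with binary expansion `γ = Σ_{k≥1} ε_k 2^{-k}` containing
infinitely many 1's, the series `f(γ) = Σ_{m≥1} (⌈2^m γ⌉ - 2^m γ)/(2^m γ)` converges
and equals `1/γ + 1 - (1/γ)·Σ_{k≥1} k ε_k 2^{-k}`. -/
theorem stmt_13 (γ : ℝ) (hγ : γ ∈ Set.Ioc (1 / 2 : ℝ) 1) (ε : ℕ → ℝ)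
    (hε0 : ε 0 = 0) (hbit : ∀ k, ε k = 0 ∨ ε k = 1)
    (hexp : HasSum (fun k : ℕ => ε k / 2 ^ k) γ)
    (hinf : ∀ m : ℕ, ∃ k > m, ε k = 1) :
    HasSum (fun m : ℕ => ((⌈(2 : ℝ) ^ (m + 1) * γ⌉ : ℝ) - 2 ^ (m + 1) * γ) /
        ((2 : ℝ) ^ (m + 1) * γ))
      (1 / γ + 1 - (1 / γ) * ∑' k : ℕ, (k : ℝ) * ε k / 2 ^ k) := by
  have hγ0 : γ ≠ 0 := (lt_trans (by norm_num) hγ.1).ne'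
  have hterm : ∀ m : ℕ, ((⌈(2 : ℝ) ^ (m + 1) * γ⌉ : ℝ) - 2 ^ (m + 1) * γ) /
      ((2 : ℝ) ^ (m + 1) * γ) = 1 / γ * (1 / 2 / 2 ^ m - binaryTail ε (m + 2)) := fun m => by
    rw [ceil_two_pow_mul_sub_self hbit hexp hinf, pow_succ]
    field_simp
  have hsum := ((hasSum_geometric_two' 1).sub (hasSum_binaryTail_add_two hε0 hbit hexp)).mul_left
    (1 / γ)
  rw [show 1 / γ + 1 - 1 / γ * ∑' k : ℕ, (k : ℝ) * ε k / 2 ^ k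
      = 1 / γ * (1 - ((∑' k : ℕ, (k : ℝ) * ε k / 2 ^ k) - γ)) by field_simp; ring]
  exact hsum.congr_fun hterm
end

section
/- Let Z_k = E₁ + … + E_k be the sum of k i.i.d. Exp(1) random variables, let γ > 0, and let Ψ(x) = 2^{{log₂ x}} (so Ψ(x)/x = 2^{-⌊log₂ x⌋}). Then for every integer k ≥ 1, P{Ψ(Z_k/γ)/Z_k > x} ~ (1/k!)·2^{k·{log₂(γx)}}·x^{-k} as x → ∞. -/
/-!
For `t > 0` one has `Ψ(t/γ)/t = 2^{-⌊log₂(t/γ)⌋}/γ`, and comparing the two integer floors shows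
that the event `Ψ(Z/γ)/Z > x` is exactly `0 < Z < c(x)` with `c(x) = 2^{{log₂(γx)}}/x ≤ 2/x`.
The normalising term is `c(x)^k/k!`, and on `(0, c)` the Gamma density `t^{k-1} e^{-t}/Γ(k)` lies
between `e^{-c}` and `1` times `t^{k-1}/Γ(k)`, so the Gamma mass of `(0, c)` is `c^k/k!` up to a
factor in `[e^{-c}, 1]`, which tends to `1` as `c → 0`.
-/

open MeasureTheory ProbabilityTheory Filter Topology Set Real

namespace Real

variable {b : ℝ}

lemma rpow_fract_logb (hb : 0 < b) (hb1 : b ≠ 1) {y : ℝ} (hy : 0 < y) :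
    b ^ Int.fract (logb b y) = y / b ^ ⌊logb b y⌋ := by
  rw [Int.fract, rpow_sub hb, rpow_logb hb hb1 hy, rpow_intCast]

lemma lt_zpow_iff_floor_logb_lt (hb : 1 < b) {y : ℝ} (hy : 0 < y) {n : ℤ} :
    y < b ^ n ↔ ⌊logb b y⌋ < n := by
  rw [Int.floor_lt, logb_lt_iff_lt_rpow hb hy, rpow_intCast]

/-- Both sides say `⌊logb b y⌋ + ⌊logb b z⌋ < 0`. -/
lemma lt_zpow_neg_floor_logb_comm (hb : 1 < b) {y z : ℝ} (hy : 0 < y) (hz : 0 < z) :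
    y < b ^ (-⌊logb b z⌋) ↔ z < b ^ (-⌊logb b y⌋) := by
  rw [lt_zpow_iff_floor_logb_lt hb hy, lt_zpow_iff_floor_logb_lt hb hz]
  omega

lemma lt_rpow_fract_logb_div_iff (hb : 1 < b) {γ x : ℝ} (hγ : 0 < γ) (hx : 0 < x) (t : ℝ) :
    x < b ^ Int.fract (logb b (t / γ)) / t ↔ t ∈ Ioo 0 (b ^ Int.fract (logb b (γ * x)) / x) := by
  have hb0 : 0 < b := one_pos.trans hb
  rcases le_or_gt t 0 with ht | ht
  · have : b ^ Int.fract (logb b (t / γ)) / t ≤ 0 :=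
      div_nonpos_of_nonneg_of_nonpos (rpow_nonneg hb0.le _) ht
    simp only [mem_Ioo, ht.not_gt, false_and, iff_false, not_lt]
    linarith
  have hLHS : b ^ Int.fract (logb b (t / γ)) / t = b ^ (-⌊logb b (t / γ)⌋) / γ := by
    rw [rpow_fract_logb hb0 hb.ne' (div_pos ht hγ), zpow_neg]
    field_simp
  have hRHS : b ^ Int.fract (logb b (γ * x)) / x = γ * b ^ (-⌊logb b (γ * x)⌋) := by
    rw [rpow_fract_logb hb0 hb.ne' (mul_pos hγ hx), zpow_neg]
    field_simp
  rw [hLHS, hRHS, mem_Ioo, and_iff_right ht, lt_div_iff₀ hγ, ← div_lt_iff₀' hγ, mul_comm,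
    lt_zpow_neg_floor_logb_comm hb (mul_pos hγ hx) (div_pos ht hγ)]

lemma tendsto_rpow_fract_logb_div_atTop (hb : 1 < b) (γ : ℝ) :
    Tendsto (fun x => b ^ Int.fract (logb b (γ * x)) / x) atTop (𝓝[>] 0) := by
  have hpos : ∀ᶠ x in atTop, 0 < b ^ Int.fract (logb b (γ * x)) / x := by
    filter_upwards [eventually_gt_atTop 0] with x hx
    have := one_pos.trans hb
    positivity
  refine tendsto_nhdsWithin_iff.2 ⟨squeeze_zero' (hpos.mono fun _ => le_of_lt) ?_
    ((tendsto_const_nhds (x := b)).div_atTop tendsto_id), hpos⟩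
  filter_upwards [eventually_gt_atTop 0] with x hx
  change _ / x ≤ b / x
  gcongr
  exact rpow_le_self_of_one_le hb.le (Int.fract_lt_one _).le

end Real

lemma toReal_gammaMeasure_apply {a r : ℝ} (ha : 0 < a) (hr : 0 < r) {s : Set ℝ}
    (hs : MeasurableSet s) :
    (gammaMeasure a r s).toReal = ∫ t in s, gammaPDFReal a r t := by
  rw [gammaMeasure, withDensity_apply _ hs, integral_eq_lintegral_of_nonneg_ae
    (ae_of_all _ (gammaPDFReal_nonneg ha hr)) (by fun_prop)]
  rfl

lemma integral_Ioo_rpow_sub_one {a b : ℝ} (ha : 0 < a) (hb : 0 ≤ b) :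
    ∫ t in Ioo 0 b, t ^ (a - 1) = b ^ a / a := by
  rw [← integral_Ioc_eq_integral_Ioo, ← intervalIntegral.integral_of_le hb,
    integral_rpow (Or.inl (by linarith)), sub_add_cancel, zero_rpow ha.ne', sub_zero]

lemma integrableOn_Ioo_rpow_sub_one {a : ℝ} (ha : 0 < a) (b : ℝ) :
    IntegrableOn (fun t : ℝ => t ^ (a - 1)) (Ioo 0 b) := by
  rcases le_or_gt b 0 with hb | hb
  · simp [Ioo_eq_empty_of_le hb]
  exact ((intervalIntegrable_iff_integrableOn_Ioc_of_le hb.le).mp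
    (intervalIntegral.intervalIntegrable_rpow' (by linarith))).mono_set Ioo_subset_Ioc_self

lemma gammaMeasure_Ioo_bounds {a b : ℝ} (ha : 0 < a) (hb : 0 < b) :
    exp (-b) * (b ^ a / Gamma (a + 1)) ≤ (gammaMeasure a 1 (Ioo 0 b)).toReal ∧
      (gammaMeasure a 1 (Ioo 0 b)).toReal ≤ b ^ a / Gamma (a + 1) := by
  set g : ℝ → ℝ := fun t => t ^ (a - 1) / Gamma a
  have hg : IntegrableOn g (Ioo 0 b) := (integrableOn_Ioo_rpow_sub_one ha b).div_const _
  have hgint : ∫ t in Ioo 0 b, g t = b ^ a / Gamma (a + 1) := by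
    rw [integral_div, integral_Ioo_rpow_sub_one ha hb.le, Gamma_add_one ha.ne', div_div]
  have hpdf : ∀ t ∈ Ioo 0 b, exp (-b) * g t ≤ gammaPDFReal a 1 t ∧ gammaPDFReal a 1 t ≤ g t := by
    rintro t ⟨ht0, htb⟩
    have hgt : 0 ≤ g t := by positivity
    have hpdf_eq : gammaPDFReal a 1 t = g t * exp (-t) := by
      rw [gammaPDFReal, if_pos ht0.le, one_rpow, one_mul]
      ring
    rw [hpdf_eq, mul_comm (exp (-b))]
    exact ⟨mul_le_mul_of_nonneg_left (exp_le_exp.2 (by linarith)) hgt,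
      mul_le_of_le_one_right hgt (exp_le_one_iff.2 (by linarith))⟩
  have hpdfint : IntegrableOn (gammaPDFReal a 1) (Ioo 0 b) := by
    refine hg.mono' (measurable_gammaPDFReal a 1).aestronglyMeasurable.restrict ?_
    refine (ae_restrict_iff' measurableSet_Ioo).mpr (ae_of_all _ fun t ht => ?_)
    rw [Real.norm_of_nonneg (gammaPDFReal_nonneg ha one_pos t)]
    exact (hpdf t ht).2
  rw [toReal_gammaMeasure_apply ha one_pos measurableSet_Ioo, ← hgint, ← integral_const_mul]
  exact ⟨setIntegral_mono_on (hg.const_mul _) hpdfint measurableSet_Ioo fun t ht => (hpdf t ht).1,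
    setIntegral_mono_on hpdfint hg measurableSet_Ioo fun t ht => (hpdf t ht).2⟩

lemma tendsto_gammaMeasure_Ioo_div {a : ℝ} (ha : 0 < a) :
    Tendsto (fun b => (gammaMeasure a 1 (Ioo 0 b)).toReal / (b ^ a / Gamma (a + 1)))
      (𝓝[>] 0) (𝓝 1) := by
  have hexp : Tendsto (fun b => exp (-b)) (𝓝[>] 0) (𝓝 1) :=
    ((by fun_prop : Continuous fun b => exp (-b)).tendsto' 0 1 (by simp)).mono_left
      nhdsWithin_le_nhds
  refine tendsto_of_tendsto_of_tendsto_of_le_of_le' hexp tendsto_const_nhds ?_ ?_ <;>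
    filter_upwards [self_mem_nhdsWithin] with b (hb : 0 < b)
  · exact (le_div_iff₀ (by positivity)).2 (gammaMeasure_Ioo_bounds ha hb).1
  · exact (div_le_one (by positivity)).2 (gammaMeasure_Ioo_bounds ha hb).2

theorem stmt_15_general {Ω : Type*} [MeasurableSpace Ω] (μ : Measure Ω)
    (k : ℕ) (hk : 1 ≤ k) (γ : ℝ) (hγ : 0 < γ)
    (Z : Ω → ℝ) (hm : Measurable Z)
    (hd : μ.map Z = gammaMeasure k 1) :
    Tendsto (fun x : ℝ =>
        (μ {ω | x < (2 : ℝ) ^ Int.fract (Real.logb 2 (Z ω / γ)) / Z ω}).toReal /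
          ((1 / (Nat.factorial k : ℝ)) *
            (2 : ℝ) ^ ((k : ℝ) * Int.fract (Real.logb 2 (γ * x))) * x ^ (-(k : ℝ))))
      atTop (𝓝 1) := by
  set c : ℝ → ℝ := fun x => (2 : ℝ) ^ Int.fract (logb 2 (γ * x)) / x
  have hc : Tendsto c atTop (𝓝[>] 0) := tendsto_rpow_fract_logb_div_atTop one_lt_two γ
  refine ((tendsto_gammaMeasure_Ioo_div (Nat.cast_pos.2 hk)).comp hc).congr' ?_
  filter_upwards [eventually_gt_atTop 0] with x hx
  have hevent : {ω | x < (2 : ℝ) ^ Int.fract (logb 2 (Z ω / γ)) / Z ω} = Z ⁻¹' Ioo 0 (c x) := by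
    ext ω
    exact lt_rpow_fract_logb_div_iff one_lt_two hγ hx (Z ω)
  have hdenom : (1 / (Nat.factorial k : ℝ)) * (2 : ℝ) ^ ((k : ℝ) * Int.fract (logb 2 (γ * x))) *
      x ^ (-(k : ℝ)) = c x ^ (k : ℝ) / Gamma (k + 1) := by
    rw [Gamma_nat_eq_factorial, div_rpow (by positivity) hx.le, ← rpow_mul zero_le_two,
      mul_comm (Int.fract _), rpow_neg hx.le]
    ring
  rw [Function.comp_apply, hevent, ← Measure.map_apply hm measurableSet_Ioo, hd, hdenom]

/-- Let `Z` be `Gamma(k,1)` distributed, `γ > 0`, `Ψ(x) = 2^{{log₂ x}}`. Then for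
every `k ≥ 1`, `P{Ψ(Z/γ)/Z > x} ~ (1/k!)·2^{k{log₂(γx)}}·x^{-k}` as `x → ∞`. -/
theorem stmt_15 {Ω : Type*} [MeasurableSpace Ω] (μ : Measure Ω) [IsProbabilityMeasure μ]
    (k : ℕ) (hk : 1 ≤ k) (γ : ℝ) (hγ : 0 < γ)
    (Z : Ω → ℝ) (hm : Measurable Z)
    (hd : μ.map Z = gammaMeasure k 1) :
    Tendsto (fun x : ℝ =>
        (μ {ω | x < (2 : ℝ) ^ Int.fract (Real.logb 2 (Z ω / γ)) / Z ω}).toReal /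
          ((1 / (Nat.factorial k : ℝ)) *
            (2 : ℝ) ^ ((k : ℝ) * Int.fract (Real.logb 2 (γ * x))) * x ^ (-(k : ℝ))))
      atTop (𝓝 1) :=
  stmt_15_general μ k hk γ hγ Z hm hd
end

section
/- For a generalized St. Petersburg(α, p) random variable X with α > 0 and 0 < p = 1 - q < 1, and X₁, X₂ independent copies, liminf_{x→∞} P{X₁+X₂ > x}/P{X₁ > x} = 2 and limsup_{x→∞} P{X₁+X₂ > x}/P{X₁ > x} = 2/q. In particular no generalized St. Petersburg distribution is subexponential. -/
open MeasureTheory ProbabilityTheory Filter Topology Set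

/-!
With `q = 1 - p` and `γ = q ^ (-1/α) > 1`, `X` lives on `γ, γ², …` and its tail `P{X > x}`
equals `q ^ K` on `[γ ^ K, γ ^ (K + 1))`, dropping by the factor `q` at every lattice point.
For independent copies, inclusion–exclusion bounds `P{X₁ + X₂ > x}` below by
`2 P{X ≥ z} - P{X ≥ z}²` for any `z ≥ x`, and the union bound bounds it above by
`2 P{X > y} + P{X > x - y}²` for any `y`; the squares are negligible against `P{X > x}`.
At a lattice point `x = γ ^ K` the lower bound with `z = x` sees `P{X ≥ x} = P{X > x} / q`,
so the ratio comes close to `2 / q`. Slightly above it, at `x = γ ^ K + γ ^ (K - C - 1)`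
with `γ ^ C (γ - 1) ≥ 1`, the upper bound with `y = γ ^ K` gives ratios close to `2`. At every
`x` the ratio lies between `2 - P{X > x}` and, taking for `y` the lattice point below `x`,
about `2 / q`.
-/

namespace StPetersburg

section Approximation

variable {β : Type*} {l : Filter β} {f : β → ℝ} {a : ℝ} {u : ℕ → ℝ}

theorem liminf_eq_of_approx (hu : Tendsto u atTop (𝓝 0))
    (hlow : ∀ n, ∀ᶠ x in l, a - u n ≤ f x) (hup : ∀ n, ∃ᶠ x in l, f x ≤ a + u n) :
    liminf f l = a := by
  have hbdd : IsBoundedUnder (· ≥ ·) l f := isBoundedUnder_of_eventually_ge (hlow 0)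
  have hcobdd : IsCoboundedUnder (· ≥ ·) l f := .of_frequently_le (hup 0)
  refine le_antisymm ?_ ?_
  · exact ge_of_tendsto' (by simpa using tendsto_const_nhds.add hu)
      fun n => liminf_le_of_frequently_le (hup n) hbdd
  · exact le_of_tendsto' (by simpa using tendsto_const_nhds.sub hu)
      fun n => le_liminf_of_le hcobdd (hlow n)

theorem limsup_eq_of_approx (hu : Tendsto u atTop (𝓝 0))
    (hup : ∀ n, ∀ᶠ x in l, f x ≤ a + u n) (hlow : ∀ n, ∃ᶠ x in l, a - u n ≤ f x) :
    limsup f l = a := by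
  have hbdd : IsBoundedUnder (· ≤ ·) l f := isBoundedUnder_of_eventually_le (hup 0)
  have hcobdd : IsCoboundedUnder (· ≤ ·) l f := .of_frequently_ge (hlow 0)
  refine le_antisymm ?_ ?_
  · exact ge_of_tendsto' (by simpa using tendsto_const_nhds.add hu)
      fun n => limsup_le_of_le hcobdd (hup n)
  · exact le_of_tendsto' (by simpa using tendsto_const_nhds.sub hu)
      fun n => le_limsup_of_frequently_le (hlow n) hbdd

end Approximation

section Independent

variable {Ω : Type*} [MeasurableSpace Ω] {μ : Measure Ω} [IsFiniteMeasure μ] {X₁ X₂ : Ω → ℝ}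

theorem le_measureReal_lt_add (hm₂ : Measurable X₂)
    (hindep : IndepFun X₁ X₂ μ) (hpos₁ : ∀ᵐ ω ∂μ, 0 < X₁ ω) (hpos₂ : ∀ᵐ ω ∂μ, 0 < X₂ ω)
    {s : Set ℝ} (hs : MeasurableSet s) {x : ℝ} (hsx : s ⊆ Ici x) :
    μ.real (X₁ ⁻¹' s) + μ.real (X₂ ⁻¹' s) - μ.real (X₁ ⁻¹' s) * μ.real (X₂ ⁻¹' s) ≤
      μ.real {ω | x < X₁ ω + X₂ ω} := by
  have hinter : μ.real (X₁ ⁻¹' s ∩ X₂ ⁻¹' s) = μ.real (X₁ ⁻¹' s) * μ.real (X₂ ⁻¹' s) := by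
    simp only [Measure.real, hindep.measure_inter_preimage_eq_mul _ _ hs hs, ENNReal.toReal_mul]
  have hsub : (X₁ ⁻¹' s ∪ X₂ ⁻¹' s : Set Ω) ≤ᵐ[μ] {ω | x < X₁ ω + X₂ ω} := by
    filter_upwards [hpos₁, hpos₂] with ω h₁ h₂ hω
    show x < X₁ ω + X₂ ω
    rcases hω with hω | hω
    · linarith [show x ≤ X₁ ω from hsx hω]
    · linarith [show x ≤ X₂ ω from hsx hω]
  have hunion : μ.real (X₁ ⁻¹' s ∪ X₂ ⁻¹' s) ≤ μ.real {ω | x < X₁ ω + X₂ ω} :=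
    ENNReal.toReal_mono (measure_ne_top _ _) (measure_mono_ae hsub)
  linarith [measureReal_union_add_inter (μ := μ) (s := X₁ ⁻¹' s) (hm₂ hs)]

theorem measureReal_lt_add_le (hindep : IndepFun X₁ X₂ μ) (x y : ℝ) :
    μ.real {ω | x < X₁ ω + X₂ ω} ≤ μ.real {ω | y < X₁ ω} + μ.real {ω | y < X₂ ω} +
      μ.real {ω | x - y < X₁ ω} * μ.real {ω | x - y < X₂ ω} := by
  have hinter : μ.real ({ω | x - y < X₁ ω} ∩ {ω | x - y < X₂ ω}) =
      μ.real {ω | x - y < X₁ ω} * μ.real {ω | x - y < X₂ ω} := by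
    simp only [Measure.real, ENNReal.toReal_mul.symm]
    exact congrArg ENNReal.toReal (hindep.measure_inter_preimage_eq_mul _ _
      measurableSet_Ioi measurableSet_Ioi)
  have hsub : {ω | x < X₁ ω + X₂ ω} ⊆
      {ω | y < X₁ ω} ∪ {ω | y < X₂ ω} ∪ ({ω | x - y < X₁ ω} ∩ {ω | x - y < X₂ ω}) := by
    intro ω (hω : x < X₁ ω + X₂ ω)
    by_cases h₁ : y < X₁ ω
    · exact Or.inl (Or.inl h₁)
    by_cases h₂ : y < X₂ ω
    · exact Or.inl (Or.inr h₂)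
    exact Or.inr ⟨show x - y < X₁ ω by linarith, show x - y < X₂ ω by linarith⟩
  rw [← hinter]
  calc μ.real {ω | x < X₁ ω + X₂ ω}
      ≤ μ.real ({ω | y < X₁ ω} ∪ {ω | y < X₂ ω} ∪
          ({ω | x - y < X₁ ω} ∩ {ω | x - y < X₂ ω})) := measureReal_mono hsub
    _ ≤ _ := (measureReal_union_le _ _).trans (by gcongr; exact measureReal_union_le _ _)

end Independent

/-- The generalized St. Petersburg(α, p) law is the case `q = 1 - p`, `γ = q ^ (-1/α)`. -/
structure IsStPetersburg {Ω : Type*} [MeasurableSpace Ω] (μ : Measure Ω) (X : Ω → ℝ)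
    (γ q : ℝ) : Prop where
  one_lt : 1 < γ
  pos : 0 < q
  lt_one : q < 1
  measurable : Measurable X
  measure_eq : ∀ k : ℕ, μ {ω | X ω = γ ^ (k + 1)} = ENNReal.ofReal (q ^ k * (1 - q))

namespace IsStPetersburg

variable {Ω : Type*} [MeasurableSpace Ω] {μ : Measure Ω} {X : Ω → ℝ} {γ q : ℝ}

theorem measure_iUnion_eq_pow (h : IsStPetersburg μ X γ q) (K : ℕ) :
    μ (⋃ j : ℕ, {ω | X ω = γ ^ (K + j + 1)}) = ENNReal.ofReal (q ^ K) := by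
  have hdisj : Pairwise (Function.onFun Disjoint fun j : ℕ => {ω | X ω = γ ^ (K + j + 1)}) := by
    intro i j hij
    refine disjoint_left.2 fun ω hi hj => hij ?_
    have := (pow_right_strictMono₀ h.one_lt).injective (hi.symm.trans hj)
    omega
  have hsum : HasSum (fun j : ℕ => q ^ (K + j) * (1 - q)) (q ^ K) := by
    have hgeom := (hasSum_geometric_of_lt_one h.pos.le h.lt_one).mul_left (q ^ K * (1 - q))
    rw [mul_inv_cancel_right₀ (sub_pos.2 h.lt_one).ne'] at hgeom
    exact hgeom.congr_fun fun j => by ring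
  rw [measure_iUnion hdisj fun j => h.measurable (measurableSet_singleton _)]
  simp_rw [h.measure_eq]
  rw [← ENNReal.ofReal_tsum_of_nonneg
    (fun j => mul_nonneg (pow_nonneg h.pos.le _) (sub_nonneg.2 h.lt_one.le)) hsum.summable,
    hsum.tsum_eq]

theorem of_measure_eq {α p : ℝ} (hα : 0 < α) (hp : p ∈ Ioo (0 : ℝ) 1) (hX : Measurable X)
    (hd : ∀ k : ℕ, 1 ≤ k →
      μ {ω | X ω = (1 - p) ^ (-(k : ℝ) / α)} = ENNReal.ofReal ((1 - p) ^ (k - 1) * p)) :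
    IsStPetersburg μ X ((1 - p) ^ (-1 / α)) (1 - p) where
  one_lt := Real.one_lt_rpow_of_pos_of_lt_one_of_neg (sub_pos.2 hp.2) (by linarith [hp.1])
    (div_neg_of_neg_of_pos neg_one_lt_zero hα)
  pos := sub_pos.2 hp.2
  lt_one := by linarith [hp.1]
  measurable := hX
  measure_eq k := by
    have hk := hd (k + 1) k.succ_pos
    rw [← Real.rpow_natCast, ← Real.rpow_mul (sub_pos.2 hp.2).le, sub_sub_cancel,
      show -1 / α * ((k + 1 : ℕ) : ℝ) = -((k + 1 : ℕ) : ℝ) / α by ring]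
    rwa [Nat.add_sub_cancel] at hk

variable [IsProbabilityMeasure μ]

theorem ae_exists_eq_pow (h : IsStPetersburg μ X γ q) :
    ∀ᵐ ω ∂μ, ∃ k : ℕ, X ω = γ ^ (k + 1) := by
  have hall := h.measure_iUnion_eq_pow 0
  simp only [zero_add, pow_zero, ENNReal.ofReal_one] at hall
  refine (ae_iff_measure_eq ?_).2 ?_ <;> rw [ofPred_exists]
  · exact (MeasurableSet.iUnion fun k => h.measurable (measurableSet_singleton _)).nullMeasurableSet
  · rw [hall, measure_univ]

theorem ae_pos (h : IsStPetersburg μ X γ q) : ∀ᵐ ω ∂μ, 0 < X ω :=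
  h.ae_exists_eq_pow.mono fun _ ⟨_, hk⟩ => hk ▸ pow_pos (zero_lt_one.trans h.one_lt) _

theorem measureReal_preimage_eq_pow (h : IsStPetersburg μ X γ q) {s : Set ℝ} {K : ℕ}
    (hs : ∀ k : ℕ, γ ^ (k + 1) ∈ s ↔ K ≤ k) : μ.real (X ⁻¹' s) = q ^ K := by
  have hae : X ⁻¹' s =ᵐ[μ] ⋃ j : ℕ, {ω | X ω = γ ^ (K + j + 1)} := by
    filter_upwards [h.ae_exists_eq_pow] with ω ⟨k, hk⟩
    refine propext ?_
    change X ω ∈ s ↔ ω ∈ ⋃ j : ℕ, {ω | X ω = γ ^ (K + j + 1)}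
    simp only [mem_iUnion, mem_ofPred_eq, hk, hs, (pow_right_strictMono₀ h.one_lt).injective.eq_iff]
    exact ⟨fun hKk => ⟨k - K, by omega⟩, fun ⟨j, hj⟩ => by omega⟩
  rw [measureReal_congr hae, Measure.real, h.measure_iUnion_eq_pow,
    ENNReal.toReal_ofReal (pow_nonneg h.pos.le K)]

theorem measureReal_lt_eq_pow (h : IsStPetersburg μ X γ q) {K : ℕ} {x : ℝ} (hx₁ : γ ^ K ≤ x)
    (hx₂ : x < γ ^ (K + 1)) : μ.real {ω | x < X ω} = q ^ K :=
  h.measureReal_preimage_eq_pow (s := Ioi x) fun k => by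
    rw [mem_Ioi]
    constructor
    · intro hk
      exact Nat.lt_succ_iff.1 ((pow_lt_pow_iff_right₀ h.one_lt).1 (hx₁.trans_lt hk))
    · intro hk
      exact hx₂.trans_le (pow_le_pow_right₀ h.one_lt.le (by omega))

theorem measureReal_preimage_Ici_eq_pow (h : IsStPetersburg μ X γ q) (K : ℕ) :
    μ.real (X ⁻¹' Ici (γ ^ (K + 1))) = q ^ K :=
  h.measureReal_preimage_eq_pow (s := Ici (γ ^ (K + 1))) fun k => by
    rw [mem_Ici, pow_le_pow_iff_right₀ h.one_lt]
    omega

theorem measureReal_lt_le_pow (h : IsStPetersburg μ X γ q) {K : ℕ} {x : ℝ} (hx : γ ^ K ≤ x) :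
    μ.real {ω | x < X ω} ≤ q ^ K :=
  calc μ.real {ω | x < X ω} ≤ μ.real {ω | γ ^ K < X ω} :=
        measureReal_mono fun _ (hω : x < _) => hx.trans_lt hω
    _ = q ^ K := h.measureReal_lt_eq_pow le_rfl (pow_lt_pow_right₀ h.one_lt K.lt_succ_self)

end IsStPetersburg

theorem exists_one_le_pow_mul_sub_one {γ : ℝ} (hγ : 1 < γ) : ∃ C : ℕ, 1 ≤ γ ^ C * (γ - 1) := by
  obtain ⟨C, hC⟩ := pow_unbounded_of_one_lt (γ - 1)⁻¹ hγ
  exact ⟨C, ((inv_lt_iff_one_lt_mul₀ (sub_pos.2 hγ)).1 hC).le⟩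

theorem pow_add_pow_add_le {γ : ℝ} (hγ : 0 ≤ γ) {C : ℕ} (hC : 1 ≤ γ ^ C * (γ - 1)) (n : ℕ) :
    γ ^ n + γ ^ (n + C) ≤ γ ^ (n + C + 1) := by
  have := mul_le_mul_of_nonneg_left hC (pow_nonneg hγ n)
  rw [pow_succ, pow_add]
  nlinarith

section Pair

variable {Ω : Type*} [MeasurableSpace Ω] {μ : Measure Ω} [IsProbabilityMeasure μ]
  {X₁ X₂ : Ω → ℝ} {γ q : ℝ}

theorem two_mul_pow_sub_le_measureReal_lt_add (h₁ : IsStPetersburg μ X₁ γ q)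
    (h₂ : IsStPetersburg μ X₂ γ q) (hindep : IndepFun X₁ X₂ μ) {n : ℕ} {x : ℝ}
    (hx : x ≤ γ ^ (n + 1)) :
    2 * q ^ n - q ^ n * q ^ n ≤ μ.real {ω | x < X₁ ω + X₂ ω} := by
  have := le_measureReal_lt_add h₂.measurable hindep h₁.ae_pos
    h₂.ae_pos measurableSet_Ici fun _ (hy : γ ^ (n + 1) ≤ _) => hx.trans hy
  rwa [h₁.measureReal_preimage_Ici_eq_pow, h₂.measureReal_preimage_Ici_eq_pow, ← two_mul] at this

theorem measureReal_lt_add_le_two_mul_pow_add (h₁ : IsStPetersburg μ X₁ γ q)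
    (h₂ : IsStPetersburg μ X₂ γ q) (hindep : IndepFun X₁ X₂ μ) {a b : ℕ} {x : ℝ}
    (hx : γ ^ a + γ ^ b ≤ x) :
    μ.real {ω | x < X₁ ω + X₂ ω} ≤ 2 * q ^ a + q ^ b * q ^ b := by
  have hb : γ ^ b ≤ x - γ ^ a := by linarith
  have hlt : γ ^ a < γ ^ (a + 1) := pow_lt_pow_right₀ h₁.one_lt a.lt_succ_self
  calc μ.real {ω | x < X₁ ω + X₂ ω}
      ≤ μ.real {ω | γ ^ a < X₁ ω} + μ.real {ω | γ ^ a < X₂ ω} +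
          μ.real {ω | x - γ ^ a < X₁ ω} * μ.real {ω | x - γ ^ a < X₂ ω} :=
        measureReal_lt_add_le hindep x (γ ^ a)
    _ ≤ q ^ a + q ^ a + q ^ b * q ^ b := by
        rw [h₁.measureReal_lt_eq_pow le_rfl hlt, h₂.measureReal_lt_eq_pow le_rfl hlt]
        exact add_le_add le_rfl (mul_le_mul (h₁.measureReal_lt_le_pow hb)
          (h₂.measureReal_lt_le_pow hb) measureReal_nonneg (pow_nonneg h₁.pos.le b))
    _ = 2 * q ^ a + q ^ b * q ^ b := by ring

theorem two_sub_pow_le_ratio (h₁ : IsStPetersburg μ X₁ γ q) (h₂ : IsStPetersburg μ X₂ γ q)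
    (hindep : IndepFun X₁ X₂ μ) {n : ℕ} {x : ℝ} (hx : γ ^ n ≤ x) :
    2 - q ^ n ≤ μ.real {ω | x < X₁ ω + X₂ ω} / μ.real {ω | x < X₁ ω} := by
  obtain ⟨K, hK₁, hK₂⟩ := exists_nat_pow_near ((one_le_pow₀ h₁.one_lt.le).trans hx) h₁.one_lt
  have hnK : n ≤ K := Nat.lt_succ_iff.1 ((pow_lt_pow_iff_right₀ h₁.one_lt).1 (hx.trans_lt hK₂))
  have hqK : q ^ K ≤ q ^ n := pow_le_pow_of_le_one h₁.pos.le h₁.lt_one.le hnK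
  have hsum := two_mul_pow_sub_le_measureReal_lt_add h₁ h₂ hindep hK₂.le
  rw [h₁.measureReal_lt_eq_pow hK₁ hK₂, le_div_iff₀ (pow_pos h₁.pos K)]
  nlinarith [mul_le_mul_of_nonneg_left hqK (pow_nonneg h₁.pos.le K)]

theorem two_div_sub_pow_le_ratio_pow (h₁ : IsStPetersburg μ X₁ γ q)
    (h₂ : IsStPetersburg μ X₂ γ q) (hindep : IndepFun X₁ X₂ μ) (n : ℕ) :
    2 / q - q ^ n ≤
      μ.real {ω | γ ^ (n + 2) < X₁ ω + X₂ ω} / μ.real {ω | γ ^ (n + 2) < X₁ ω} := by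
  have hsum := two_mul_pow_sub_le_measureReal_lt_add h₁ h₂ hindep (n := n + 1) le_rfl
  rw [h₁.measureReal_lt_eq_pow le_rfl (pow_lt_pow_right₀ h₁.one_lt (n + 2).lt_succ_self),
    le_div_iff₀ (pow_pos h₁.pos _)]
  calc (2 / q - q ^ n) * q ^ (n + 2) = 2 * q ^ (n + 1) - q ^ (n + 1) * q ^ (n + 1) := by
        field_simp [h₁.pos.ne']
        ring
    _ ≤ _ := hsum

theorem ratio_pow_add_pow_le_two_add_pow (h₁ : IsStPetersburg μ X₁ γ q)
    (h₂ : IsStPetersburg μ X₂ γ q) (hindep : IndepFun X₁ X₂ μ) {C : ℕ}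
    (hC : 1 ≤ γ ^ C * (γ - 1)) (m : ℕ) :
    μ.real {ω | γ ^ (m + 2 * C + 2) + γ ^ (m + C + 1) < X₁ ω + X₂ ω} /
      μ.real {ω | γ ^ (m + 2 * C + 2) + γ ^ (m + C + 1) < X₁ ω} ≤ 2 + q ^ m := by
  have hgap := pow_add_pow_add_le (zero_le_one.trans h₁.one_lt.le) hC (m + C + 2)
  rw [show m + C + 2 + C = m + 2 * C + 2 by ring] at hgap
  have hlt : γ ^ (m + C + 1) < γ ^ (m + C + 2) := pow_lt_pow_right₀ h₁.one_lt (by omega)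
  have hsum := measureReal_lt_add_le_two_mul_pow_add h₁ h₂ hindep
    (le_refl (γ ^ (m + 2 * C + 2) + γ ^ (m + C + 1)))
  have hsq : q ^ (m + C + 1) * q ^ (m + C + 1) = q ^ m * q ^ (m + 2 * C + 2) := by
    rw [← pow_add, ← pow_add]
    ring_nf
  rw [h₁.measureReal_lt_eq_pow (le_add_of_nonneg_right (pow_nonneg (by linarith [h₁.one_lt]) _))
    (by linarith), div_le_iff₀ (pow_pos h₁.pos _)]
  linarith

theorem ratio_le_two_div_add_pow (h₁ : IsStPetersburg μ X₁ γ q)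
    (h₂ : IsStPetersburg μ X₂ γ q) (hindep : IndepFun X₁ X₂ μ) {C : ℕ}
    (hC : 1 ≤ γ ^ C * (γ - 1)) {m : ℕ} {x : ℝ} (hx : γ ^ (m + 2 * C + 2) ≤ x) :
    μ.real {ω | x < X₁ ω + X₂ ω} / μ.real {ω | x < X₁ ω} ≤ 2 / q + q ^ m := by
  obtain ⟨K, hK₁, hK₂⟩ := exists_nat_pow_near ((one_le_pow₀ h₁.one_lt.le).trans hx) h₁.one_lt
  have hmK : m + 2 * C + 2 ≤ K :=
    Nat.lt_succ_iff.1 ((pow_lt_pow_iff_right₀ h₁.one_lt).1 (hx.trans_lt hK₂))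
  obtain ⟨k, rfl⟩ : ∃ k, K = k + 2 * C + 2 := ⟨K - (2 * C + 2), by omega⟩
  have hgap := pow_add_pow_add_le (zero_le_one.trans h₁.one_lt.le) hC (k + C + 1)
  rw [show k + C + 1 + C = k + 2 * C + 1 by ring] at hgap
  have hsum := measureReal_lt_add_le_two_mul_pow_add h₁ h₂ hindep
    (add_comm (γ ^ (k + 2 * C + 1)) _ ▸ hgap.trans hK₁)
  have hsq : q ^ (k + C + 1) * q ^ (k + C + 1) = q ^ k * q ^ (k + 2 * C + 2) := by
    rw [← pow_add, ← pow_add]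
    ring_nf
  have hqk : q ^ k ≤ q ^ m := pow_le_pow_of_le_one h₁.pos.le h₁.lt_one.le (by omega)
  rw [h₁.measureReal_lt_eq_pow hK₁ hK₂, div_le_iff₀ (pow_pos h₁.pos _)]
  calc μ.real {ω | x < X₁ ω + X₂ ω}
      ≤ (2 / q + q ^ k) * q ^ (k + 2 * C + 2) := by
        rw [add_mul, ← hsq, pow_succ _ (k + 2 * C + 1)]
        field_simp [h₁.pos.ne']
        linarith
    _ ≤ (2 / q + q ^ m) * q ^ (k + 2 * C + 2) :=
        mul_le_mul_of_nonneg_right (by linarith) (pow_nonneg h₁.pos.le _)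

theorem liminf_ratio_eq_two (h₁ : IsStPetersburg μ X₁ γ q) (h₂ : IsStPetersburg μ X₂ γ q)
    (hindep : IndepFun X₁ X₂ μ) :
    liminf (fun x => μ.real {ω | x < X₁ ω + X₂ ω} / μ.real {ω | x < X₁ ω}) atTop = 2 := by
  obtain ⟨C, hC⟩ := exists_one_le_pow_mul_sub_one h₁.one_lt
  refine liminf_eq_of_approx (tendsto_pow_atTop_nhds_zero_of_lt_one h₁.pos.le h₁.lt_one)
    (fun n => (eventually_ge_atTop (γ ^ n)).mono fun x hx => two_sub_pow_le_ratio h₁ h₂ hindep hx)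
    fun n => ?_
  have hx : Tendsto (fun m : ℕ => γ ^ (m + 2 * C + 2) + γ ^ (m + C + 1)) atTop atTop :=
    ((tendsto_pow_atTop_atTop_of_one_lt h₁.one_lt).comp
      ((tendsto_add_atTop_nat 2).comp (tendsto_add_atTop_nat (2 * C)))).atTop_add_nonneg
      fun m => pow_nonneg (zero_le_one.trans h₁.one_lt.le) _
  refine hx.frequently (Eventually.frequently ((eventually_ge_atTop n).mono fun m hm => ?_))
  have hqm : q ^ m ≤ q ^ n := pow_le_pow_of_le_one h₁.pos.le h₁.lt_one.le hm
  linarith [ratio_pow_add_pow_le_two_add_pow h₁ h₂ hindep hC m]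

theorem limsup_ratio_eq_two_div (h₁ : IsStPetersburg μ X₁ γ q) (h₂ : IsStPetersburg μ X₂ γ q)
    (hindep : IndepFun X₁ X₂ μ) :
    limsup (fun x => μ.real {ω | x < X₁ ω + X₂ ω} / μ.real {ω | x < X₁ ω}) atTop = 2 / q := by
  obtain ⟨C, hC⟩ := exists_one_le_pow_mul_sub_one h₁.one_lt
  refine limsup_eq_of_approx (tendsto_pow_atTop_nhds_zero_of_lt_one h₁.pos.le h₁.lt_one)
    (fun n => (eventually_ge_atTop (γ ^ (n + 2 * C + 2))).mono fun x hx =>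
      ratio_le_two_div_add_pow h₁ h₂ hindep hC hx)
    fun n => ?_
  have hx : Tendsto (fun m : ℕ => γ ^ (m + 2)) atTop atTop :=
    (tendsto_pow_atTop_atTop_of_one_lt h₁.one_lt).comp (tendsto_add_atTop_nat 2)
  refine hx.frequently (Eventually.frequently ((eventually_ge_atTop n).mono fun m hm => ?_))
  have hqm : q ^ m ≤ q ^ n := pow_le_pow_of_le_one h₁.pos.le h₁.lt_one.le hm
  linarith [two_div_sub_pow_le_ratio_pow h₁ h₂ hindep m]

end Pair

end StPetersburg

open StPetersburg

/-- For a generalized St. Petersburg(α, p) distribution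
(`P{X = q^{-k/α}} = q^{k-1}p`, `q = 1-p`) and independent copies `X₁, X₂`:
`liminf_{x→∞} P{X₁+X₂>x}/P{X₁>x} = 2` and `limsup_{x→∞} P{X₁+X₂>x}/P{X₁>x} = 2/q`.
In particular, no generalized St. Petersburg distribution is subexponential. -/
theorem stmt_17 {Ω : Type*} [MeasurableSpace Ω] (μ : Measure Ω) [IsProbabilityMeasure μ]
    (α p : ℝ) (hα : 0 < α) (hp : p ∈ Set.Ioo (0 : ℝ) 1)
    (X₁ X₂ : Ω → ℝ) (hm₁ : Measurable X₁) (hm₂ : Measurable X₂)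
    (hindep : IndepFun X₁ X₂ μ)
    (hd₁ : ∀ k : ℕ, 1 ≤ k →
      μ {ω | X₁ ω = (1 - p) ^ (-(k : ℝ) / α)} = ENNReal.ofReal ((1 - p) ^ (k - 1) * p))
    (hd₂ : ∀ k : ℕ, 1 ≤ k →
      μ {ω | X₂ ω = (1 - p) ^ (-(k : ℝ) / α)} = ENNReal.ofReal ((1 - p) ^ (k - 1) * p)) :
    liminf (fun x : ℝ =>
        (μ {ω | x < X₁ ω + X₂ ω}).toReal / (μ {ω | x < X₁ ω}).toReal) atTop = 2 ∧
    limsup (fun x : ℝ =>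
        (μ {ω | x < X₁ ω + X₂ ω}).toReal / (μ {ω | x < X₁ ω}).toReal) atTop =
      2 / (1 - p) := by
  have h₁ := IsStPetersburg.of_measure_eq hα hp hm₁ hd₁
  have h₂ := IsStPetersburg.of_measure_eq hα hp hm₂ hd₂
  exact ⟨liminf_ratio_eq_two h₁ h₂ hindep, limsup_ratio_eq_two_div h₁ h₂ hindep⟩
end
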